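/- arXiv:math-ph/0102002 — 3 statements merged into one kernel-verified Lean document; each statement's English description precedes it below -/
import Mathlib

section
/- If the stabilizer H_γ = {h ∈ H : γh = γ} of a point γ in the dual of ℝ^k is noncompact, then for any measurable function ĝ, the integral ∫_H |ĝ(γh)|² dμ_H(h) is either 0 or +∞. -/
open MeasureTheory Matrix
open scoped Pointwise
noncomputable section

/-- The dual (right) action of `GL(k,ℝ)` on the character space of `ℝ^k`,
identified with row vectors: matrix multiplication on the right. -/
def dualAct {k : ℕ} (γ : Fin k → ℝ) (h : Matrix.GeneralLinearGroup (Fin k) ℝ) : Fin k → ℝ :=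
  Matrix.vecMul γ (h : Matrix (Fin k) (Fin k) ℝ)

section Aux

variable {k : ℕ}

local notation "Mat" => Matrix (Fin k) (Fin k) ℝ

lemma aux_range_embedProduct_closed :
    IsClosed (Set.range (Units.embedProduct Mat)) := by
  have hset : Set.range (Units.embedProduct Mat) =
      ((fun p : Mat × Matᵐᵒᵖ => p.1 * p.2.unop) ⁻¹' {1}) ∩
      ((fun p : Mat × Matᵐᵒᵖ => p.2.unop * p.1) ⁻¹' {1}) := by
    ext p
    constructor
    · rintro ⟨u, rfl⟩
      constructor
      · simp only [Set.mem_preimage, Units.embedProduct, MonoidHom.coe_mk, OneHom.coe_mk,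
          MulOpposite.unop_op, Set.mem_singleton_iff]
        exact u.mul_inv
      · simp only [Set.mem_preimage, Units.embedProduct, MonoidHom.coe_mk, OneHom.coe_mk,
          MulOpposite.unop_op, Set.mem_singleton_iff]
        exact u.inv_mul
    · rintro ⟨h1, h2⟩
      simp only [Set.mem_preimage, Set.mem_singleton_iff] at h1 h2
      refine ⟨⟨p.1, p.2.unop, h1, h2⟩, ?_⟩
      simp only [Units.embedProduct, MonoidHom.coe_mk, OneHom.coe_mk]
      exact Prod.ext rfl (by simp)
  have hc1 : Continuous fun p : Mat × Matᵐᵒᵖ => p.1 * p.2.unop :=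
    Continuous.matrix_mul continuous_fst (MulOpposite.continuous_unop.comp continuous_snd)
  have hc2 : Continuous fun p : Mat × Matᵐᵒᵖ => p.2.unop * p.1 :=
    Continuous.matrix_mul (MulOpposite.continuous_unop.comp continuous_snd) continuous_fst
  rw [hset]
  exact ((isClosed_singleton.preimage hc1).inter (isClosed_singleton.preimage hc2))

lemma aux_sigmaCompact_GL : SigmaCompactSpace (Matrix.GeneralLinearGroup (Fin k) ℝ) := by
  have h1 : SigmaCompactSpace Mat := inferInstanceAs (SigmaCompactSpace (Fin k → Fin k → ℝ))
  have h2 : SigmaCompactSpace Matᵐᵒᵖ :=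
    (MulOpposite.opHomeomorph (M := Mat)).symm.isClosedEmbedding.sigmaCompactSpace
  have he : Topology.IsClosedEmbedding (Units.embedProduct Mat) :=
    ⟨Units.isEmbedding_embedProduct, aux_range_embedProduct_closed⟩
  exact he.sigmaCompactSpace

end Aux

set_option maxHeartbeats 1000000 in
set_option synthInstance.maxHeartbeats 200000 in
/-- If the stabilizer `H_γ = {h ∈ H : γh = γ}` is noncompact, then for any
measurable `ĝ` the integral `∫_H |ĝ(γh)|² dμ_H(h)` is either `0` or `+∞`. -/
theorem integral_zero_or_top_of_noncompact_stabilizer {k : ℕ}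
    (H : Subgroup (Matrix.GeneralLinearGroup (Fin k) ℝ))
    (hH : IsClosed (H : Set (Matrix.GeneralLinearGroup (Fin k) ℝ)))
    [MeasurableSpace ↥H] [BorelSpace ↥H]
    (μH : Measure ↥H) [μH.IsHaarMeasure]
    (γ : Fin k → ℝ)
    (hnc : ¬ IsCompact {h : ↥H | dualAct γ (h : Matrix.GeneralLinearGroup (Fin k) ℝ) = γ})
    (ghat : (Fin k → ℝ) → ℂ) (hmeas : Measurable ghat) :
    (∫⁻ h : ↥H, (‖ghat (dualAct γ (h : Matrix.GeneralLinearGroup (Fin k) ℝ))‖₊ :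
        ENNReal) ^ 2 ∂μH) = 0 ∨
    (∫⁻ h : ↥H, (‖ghat (dualAct γ (h : Matrix.GeneralLinearGroup (Fin k) ℝ))‖₊ :
        ENNReal) ^ 2 ∂μH) = ⊤ := by
  classical
  -- basic topological facts about `↥H`
  have hσGL : SigmaCompactSpace (Matrix.GeneralLinearGroup (Fin k) ℝ) := aux_sigmaCompact_GL
  have hσ : SigmaCompactSpace ↥H := hH.sigmaCompactSpace
  -- the function under the integral
  set f : ↥H → ENNReal := fun h =>
    (‖ghat (dualAct γ (h : Matrix.GeneralLinearGroup (Fin k) ℝ))‖₊ : ENNReal) ^ 2 with hf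
  -- continuity of the orbit map on `↥H`
  have horbit : Continuous fun h : ↥H =>
      dualAct γ (h : Matrix.GeneralLinearGroup (Fin k) ℝ) := by
    have h1 : Continuous fun h : ↥H =>
        ((h : Matrix.GeneralLinearGroup (Fin k) ℝ) : Matrix (Fin k) (Fin k) ℝ) :=
      Units.continuous_val.comp continuous_subtype_val
    exact Continuous.matrix_vecMul continuous_const h1
  -- measurability of f
  have hfmeas : Measurable f := by
    rw [hf]
    have : Measurable fun h : ↥H =>
        ghat (dualAct γ (h : Matrix.GeneralLinearGroup (Fin k) ℝ)) :=
      hmeas.comp horbit.measurable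
    exact ((this.nnnorm.coe_nnreal_ennreal).pow_const 2)
  -- the stabilizer and its invariance property
  set S : Set ↥H := {h : ↥H | dualAct γ (h : Matrix.GeneralLinearGroup (Fin k) ℝ) = γ} with hS
  have hSclosed : IsClosed S := by
    have : S = (fun h : ↥H => dualAct γ (h : Matrix.GeneralLinearGroup (Fin k) ℝ)) ⁻¹' {γ} := by
      ext h; simp [hS]
    rw [this]
    exact isClosed_singleton.preimage horbit
  have hinv : ∀ s ∈ S, ∀ h : ↥H, f (s * h) = f h := by
    intro s hs h
    have hs' : Matrix.vecMul γ
        (((s : Matrix.GeneralLinearGroup (Fin k) ℝ)) : Matrix (Fin k) (Fin k) ℝ) = γ := hs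
    have hact : dualAct γ ((s * h : ↥H) : Matrix.GeneralLinearGroup (Fin k) ℝ)
        = dualAct γ (h : Matrix.GeneralLinearGroup (Fin k) ℝ) := by
      have hcoe : (((s * h : ↥H) : Matrix.GeneralLinearGroup (Fin k) ℝ) :
          Matrix (Fin k) (Fin k) ℝ) =
          (((s : Matrix.GeneralLinearGroup (Fin k) ℝ)) : Matrix (Fin k) (Fin k) ℝ) *
          (((h : Matrix.GeneralLinearGroup (Fin k) ℝ)) : Matrix (Fin k) (Fin k) ℝ) := rfl
      simp only [dualAct, hcoe, ← Matrix.vecMul_vecMul]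
      rw [hs']
    simp only [hf]
    rw [hact]
  -- argue by contradiction
  by_contra hcon
  push_neg at hcon
  obtain ⟨hI0, hItop⟩ := hcon
  set I : ENNReal := ∫⁻ h : ↥H, f h ∂μH with hIdef
  -- the measure with density f
  set ν : Measure ↥H := μH.withDensity f with hν
  have hνuniv : ν Set.univ = I := by
    rw [hν, withDensity_apply _ MeasurableSet.univ, setLIntegral_univ, hIdef]
  -- smul of measurable sets is measurable
  have hsmulMeas : ∀ (s : ↥H) (A : Set ↥H), MeasurableSet A → MeasurableSet (s • A) := by
    intro s A hA
    have hid : s • A = (fun x : ↥H => s⁻¹ * x) ⁻¹' A := by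
      ext x
      rw [Set.mem_smul_set_iff_inv_smul_mem]
      rfl
    rw [hid]
    exact hA.preimage ((continuous_const.mul continuous_id).measurable)
  -- translate invariance of ν under elements of S
  have hνsmul : ∀ s ∈ S, ∀ A : Set ↥H, MeasurableSet A → ν (s • A) = ν A := by
    intro s hs A hA
    have hAs : MeasurableSet (s • A) := hsmulMeas s A hA
    rw [hν, withDensity_apply _ hAs, withDensity_apply _ hA,
      ← lintegral_indicator hAs, ← lintegral_indicator hA]
    rw [← lintegral_mul_left_eq_self (fun x => (s • A).indicator f x) s]
    congr 1
    ext x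
    by_cases hx : x ∈ A
    · have hmem : s * x ∈ s • A := Set.smul_mem_smul_set hx
      rw [Set.indicator_of_mem hmem, Set.indicator_of_mem hx, hinv s hs x]
    · have hmem : s * x ∉ s • A := by
        intro hmem
        obtain ⟨y, hy, hxy⟩ := hmem
        have hyx : y = x := mul_left_cancel (a := s) (by simpa [smul_eq_mul] using hxy)
        exact hx (hyx ▸ hy)
      rw [Set.indicator_of_notMem hmem, Set.indicator_of_notMem hx]
  -- find a compact set of positive ν-measure
  obtain ⟨C, hCcomp, hCcover⟩ := SigmaCompactSpace.exists_compact_covering (X := ↥H)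
  have hKpos : ∃ n, ν (C n) ≠ 0 := by
    by_contra hall
    push_neg at hall
    have h0 : ν (⋃ n, C n) = 0 := measure_iUnion_null hall
    rw [hCcover, hνuniv] at h0
    exact hI0 h0
  obtain ⟨n0, hn0⟩ := hKpos
  set K : Set ↥H := C n0 with hK
  have hKcomp : IsCompact K := hCcomp n0
  have hKν : ν K ≠ 0 := hn0
  have hKmeas : MeasurableSet K := hKcomp.isClosed.measurableSet
  -- from every compact set we can escape within S
  have key : ∀ c : Set ↥H, IsCompact c → ∃ x, x ∈ S ∧ x ∉ c := by
    intro c hc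
    by_contra hno
    push_neg at hno
    exact hnc (hc.of_isClosed_subset hSclosed hno)
  have key' : ∀ c : Set ↥H, ∃ x, IsCompact c → (x ∈ S ∧ x ∉ c) := by
    intro c
    by_cases hc : IsCompact c
    · obtain ⟨x, hx⟩ := key c hc
      exact ⟨x, fun _ => hx⟩
    · exact ⟨1, fun h => absurd h hc⟩
  choose F hF using key'
  -- recursively construct the translating sequence
  obtain ⟨p, hp0, hpsucc⟩ : ∃ p : ℕ → (↥H × Set ↥H),
      p 0 = (F (∅ * K⁻¹), (∅ : Set ↥H)) ∧
      ∀ n, p (n + 1) = (F (((p n).2 ∪ (p n).1 • K) * K⁻¹), (p n).2 ∪ (p n).1 • K) := by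
    refine ⟨fun n => Nat.rec (F (∅ * K⁻¹), (∅ : Set ↥H))
      (fun _ q => (F ((q.2 ∪ q.1 • K) * K⁻¹), q.2 ∪ q.1 • K)) n, rfl, fun n => rfl⟩
  set s : ℕ → ↥H := fun n => (p n).1 with hsdef
  -- invariants
  have hcompU : ∀ n, IsCompact (p n).2 := by
    intro n
    induction n with
    | zero => rw [hp0]; exact isCompact_empty
    | succ m ih =>
      rw [hpsucc m]
      exact ih.union (hKcomp.smul (p m).1)
  have hsS : ∀ n, s n ∈ S ∧ s n ∉ (p n).2 * K⁻¹ := by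
    intro n
    have hcomp : IsCompact ((p n).2 * K⁻¹) := (hcompU n).mul hKcomp.inv
    cases n with
    | zero =>
      have h1 := hF (∅ * K⁻¹) (by rw [hp0] at hcomp; exact hcomp)
      constructor
      · simp only [hsdef, hp0]; exact h1.1
      · simp only [hsdef, hp0]; exact h1.2
    | succ m =>
      have hcomp' : IsCompact (((p m).2 ∪ (p m).1 • K) * K⁻¹) := by
        rw [hpsucc m] at hcomp; exact hcomp
      have h1 := hF (((p m).2 ∪ (p m).1 • K) * K⁻¹) hcomp'
      constructor
      · simp only [hsdef, hpsucc m]; exact h1.1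
      · simp only [hsdef, hpsucc m]; exact h1.2
  have hsub : ∀ m n, m < n → s m • K ⊆ (p n).2 := by
    intro m n hmn
    induction n with
    | zero => omega
    | succ j ih =>
      rw [hpsucc j]
      rcases Nat.lt_succ_iff_lt_or_eq.mp hmn with h | h
      · exact (ih h).trans Set.subset_union_left
      · subst h
        exact Set.subset_union_right
  -- pairwise disjointness of the translates
  have hdisj : Pairwise (Function.onFun Disjoint fun n => s n • K) := by
    have hgen : ∀ m n, m < n → Disjoint (s m • K) (s n • K) := by
      intro m n hmn
      rw [Set.disjoint_left]
      rintro y ⟨a, ha, rfl⟩ ⟨b, hb, hab⟩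
      have heq : s n = s m * a * b⁻¹ := by
        simp only [smul_eq_mul] at hab ⊢
        rw [← hab]
        group
      have hmem : s n ∈ (p n).2 * K⁻¹ := by
        rw [heq]
        exact Set.mul_mem_mul (hsub m n hmn (Set.smul_mem_smul_set ha)) (Set.inv_mem_inv.mpr hb)
      exact (hsS n).2 hmem
    intro m n hmn
    rcases lt_or_gt_of_ne hmn with h | h
    · exact hgen m n h
    · exact (hgen n m h).symm
  -- each translate has the same positive measure
  have hνs : ∀ n, ν (s n • K) = ν K := fun n => hνsmul (s n) (hsS n).1 K hKmeas
  have hmeas' : ∀ n, MeasurableSet (s n • K) := fun n => hsmulMeas (s n) K hKmeas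
  have htop : ν (⋃ n, s n • K) = ⊤ := by
    rw [measure_iUnion hdisj hmeas']
    simp only [hνs]
    exact ENNReal.tsum_const_eq_top_of_ne_zero hKν
  have hfinal : ν Set.univ = ⊤ := by
    refine top_unique ?_
    rw [← htop]
    exact measure_mono (Set.subset_univ _)
  rw [hνuniv] at hfinal
  exact hItop hfinal
end
end

section
/- Assume G = ℝ^k ⋊ H is unimodular. Let λ̄ be the measure on the orbit space Ω_rc/H determined by the disintegration of Lebesgue measure with fiber measures μ_{γH}. Then for every a ∈ ℝ⁺, the measure λ̄_a defined by λ̄_a(B) := λ̄(Ba) equals a^k · λ̄, where the ℝ⁺-action on orbits is a·(γH) = (aγ)H. -/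
open MeasureTheory Matrix
noncomputable section

/-- The orbit of `ω` under the dual action of `H`. -/
def dualOrbit {k : ℕ} (H : Subgroup (Matrix.GeneralLinearGroup (Fin k) ℝ))
    (ω : Fin k → ℝ) : Set (Fin k → ℝ) :=
  {v | ∃ h : ↥H, v = dualAct ω (h : Matrix.GeneralLinearGroup (Fin k) ℝ)}

/-- `Ω_rc`: the set of dual points with compact stabilizer and locally closed orbit. -/
def OmegaRC {k : ℕ} (H : Subgroup (Matrix.GeneralLinearGroup (Fin k) ℝ)) : Set (Fin k → ℝ) :=
  {ω | IsCompact {h : ↥H | dualAct ω (h : Matrix.GeneralLinearGroup (Fin k) ℝ) = ω} ∧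
    IsLocallyClosed (dualOrbit H ω)}

theorem dualAct_mul {k : ℕ} (γ : Fin k → ℝ) (g₁ g₂ : Matrix.GeneralLinearGroup (Fin k) ℝ) :
    dualAct (dualAct γ g₁) g₂ = dualAct γ (g₁ * g₂) := by
  simp [dualAct, Matrix.vecMul_vecMul, Units.val_mul]

theorem dualAct_one {k : ℕ} (γ : Fin k → ℝ) : dualAct γ 1 = γ := by
  simp [dualAct]

/-- The orbit equivalence relation of the dual action of `H`. -/
def orbitSetoid {k : ℕ} (H : Subgroup (Matrix.GeneralLinearGroup (Fin k) ℝ)) :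
    Setoid (Fin k → ℝ) where
  r ω ω' := ∃ h : ↥H, ω' = dualAct ω (h : Matrix.GeneralLinearGroup (Fin k) ℝ)
  iseqv := by
    constructor
    · intro ω; exact ⟨1, by rw [OneMemClass.coe_one, dualAct_one]⟩
    · rintro ω ω' ⟨h, rfl⟩
      refine ⟨h⁻¹, ?_⟩
      rw [dualAct_mul, ← Subgroup.coe_mul, mul_inv_cancel, OneMemClass.coe_one, dualAct_one]
    · rintro a b c ⟨h, rfl⟩ ⟨h', rfl⟩
      refine ⟨h * h', ?_⟩
      rw [dualAct_mul, ← Subgroup.coe_mul]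

/-- The orbit space `dual/H`. -/
def OrbSpace {k : ℕ} (H : Subgroup (Matrix.GeneralLinearGroup (Fin k) ℝ)) : Type :=
  Quotient (orbitSetoid H)

instance {k : ℕ} (H : Subgroup (Matrix.GeneralLinearGroup (Fin k) ℝ)) :
    MeasurableSpace (OrbSpace H) :=
  Quotient.instMeasurableSpace

/-- The action of a scalar `a ∈ ℝ⁺` on the orbit space, `a·(γH) = (aγ)H`. -/
def scaleOrb {k : ℕ} (H : Subgroup (Matrix.GeneralLinearGroup (Fin k) ℝ)) (a : ℝ) :
    OrbSpace H → OrbSpace H :=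
  Quotient.map (fun ω => a • ω) (by
    rintro ω ω' ⟨h, rfl⟩
    exact ⟨h, by ext i; simp [dualAct, Matrix.vecMul, dotProduct, Finset.mul_sum, mul_assoc]⟩)

/-! ### Auxiliary material for the proof -/

open Set Topology Filter
open scoped Pointwise ENNReal
set_option linter.unusedSectionVars false

section Aux

variable {k : ℕ} {H : Subgroup (Matrix.GeneralLinearGroup (Fin k) ℝ)}

private lemma qms_act_mul' (γ : Fin k → ℝ) (h₁ h₂ : ↥H) :
    dualAct (dualAct γ ↑h₁) ↑h₂ = dualAct γ ↑(h₁ * h₂) := by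
  rw [dualAct_mul, Subgroup.coe_mul]

private lemma qms_act_smul (c : ℝ) (γ : Fin k → ℝ) (g : Matrix.GeneralLinearGroup (Fin k) ℝ) :
    dualAct (c • γ) g = c • dualAct γ g := by
  simp [dualAct, Matrix.smul_vecMul]

private lemma qms_cont_pair :
    Continuous fun p : (Fin k → ℝ) × ↥H => dualAct p.1 ↑p.2 := by
  unfold dualAct
  exact Continuous.matrix_vecMul continuous_fst
    ((Units.continuous_val.comp continuous_subtype_val).comp continuous_snd)

private lemma qms_cont_left (γ : Fin k → ℝ) :
    Continuous fun h : ↥H => dualAct γ ↑h :=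
  qms_cont_pair.comp (Continuous.prodMk_right γ)

private lemma qms_cont_right (g : Matrix.GeneralLinearGroup (Fin k) ℝ) :
    Continuous fun ω : Fin k → ℝ => dualAct ω g := by
  unfold dualAct
  exact Continuous.matrix_vecMul continuous_id continuous_const

/-- Right translation by a group element, as a homeomorphism of the dual. -/
private def qmsHomeo (g : Matrix.GeneralLinearGroup (Fin k) ℝ) :
    (Fin k → ℝ) ≃ₜ (Fin k → ℝ) where
  toFun ω := dualAct ω g
  invFun ω := dualAct ω g⁻¹
  left_inv ω := by
    show dualAct (dualAct ω g) g⁻¹ = ω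
    rw [dualAct_mul, mul_inv_cancel, dualAct_one]
  right_inv ω := by
    show dualAct (dualAct ω g⁻¹) g = ω
    rw [dualAct_mul, inv_mul_cancel, dualAct_one]
  continuous_toFun := qms_cont_right g
  continuous_invFun := qms_cont_right g⁻¹

/-- Scalar multiplication as a homeomorphism of the dual. -/
private def qmsSmulHomeo {c : ℝ} (hc : c ≠ 0) :
    (Fin k → ℝ) ≃ₜ (Fin k → ℝ) where
  toFun ω := c • ω
  invFun ω := c⁻¹ • ω
  left_inv ω := inv_smul_smul₀ hc ω
  right_inv ω := smul_inv_smul₀ hc ω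
  continuous_toFun := continuous_const_smul c
  continuous_invFun := continuous_const_smul c⁻¹

private lemma qms_mem_orbit_self (γ : Fin k → ℝ) : γ ∈ dualOrbit H γ :=
  ⟨1, by rw [OneMemClass.coe_one, dualAct_one]⟩

private lemma qms_orbit_act (γ : Fin k → ℝ) (h : ↥H) :
    dualOrbit H (dualAct γ ↑h) = dualOrbit H γ := by
  ext v
  constructor
  · rintro ⟨h', rfl⟩
    exact ⟨h * h', (qms_act_mul' γ h h').symm ▸ rfl⟩
  · rintro ⟨h', rfl⟩
    refine ⟨h⁻¹ * h', ?_⟩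
    rw [qms_act_mul' γ h (h⁻¹ * h'), ← mul_assoc, mul_inv_cancel, one_mul]

private lemma qms_orbit_image_homeo (γ : Fin k → ℝ) (h : ↥H) :
    (qmsHomeo (h : Matrix.GeneralLinearGroup (Fin k) ℝ)) '' dualOrbit H γ = dualOrbit H γ := by
  ext v
  constructor
  · rintro ⟨w, ⟨h', rfl⟩, rfl⟩
    show dualAct (dualAct γ ↑h') ↑h ∈ _
    rw [qms_act_mul']
    exact ⟨h' * h, rfl⟩
  · rintro ⟨h', rfl⟩
    refine ⟨dualAct γ ↑(h' * h⁻¹), ⟨h' * h⁻¹, rfl⟩, ?_⟩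
    show dualAct (dualAct γ ↑(h' * h⁻¹)) ↑h = _
    rw [qms_act_mul', mul_assoc, inv_mul_cancel, mul_one]

private lemma qms_orbit_smul {c : ℝ} (hc : c ≠ 0) (γ : Fin k → ℝ) :
    dualOrbit H (c • γ) = (qmsSmulHomeo (k := k) hc) '' dualOrbit H γ := by
  ext v
  constructor
  · rintro ⟨h, rfl⟩
    exact ⟨dualAct γ ↑h, ⟨h, rfl⟩, by simp [qmsSmulHomeo, qms_act_smul]⟩
  · rintro ⟨w, ⟨h, rfl⟩, rfl⟩
    exact ⟨h, by simp [qmsSmulHomeo, qms_act_smul]⟩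

/-- The stabilizer of `γ·h` is the conjugate of the stabilizer of `γ`. -/
private lemma qms_stab_act (γ : Fin k → ℝ) (h : ↥H) :
    {s : ↥H | dualAct (dualAct γ ↑h) ↑s = dualAct γ ↑h}
      = (fun s : ↥H => h⁻¹ * s * h) '' {s : ↥H | dualAct γ ↑s = γ} := by
  ext s
  simp only [mem_setOf_eq, mem_image]
  constructor
  · intro hs
    refine ⟨h * s * h⁻¹, ?_, by group⟩
    have : dualAct γ ↑(h * s) = dualAct γ ↑h := by
      rw [← qms_act_mul']; exact hs
    calc dualAct γ ↑(h * s * h⁻¹) = dualAct (dualAct γ ↑(h * s)) ↑h⁻¹ := by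
          rw [qms_act_mul']
      _ = dualAct (dualAct γ ↑h) ↑h⁻¹ := by rw [this]
      _ = γ := by rw [qms_act_mul', mul_inv_cancel, OneMemClass.coe_one, dualAct_one]
  · rintro ⟨s', hs', rfl⟩
    have h2 : dualAct γ ↑(s' * h) = dualAct γ ↑h := by
      rw [← qms_act_mul', hs']
    calc dualAct (dualAct γ ↑h) ↑(h⁻¹ * s' * h)
        = dualAct γ ↑(h * (h⁻¹ * s' * h)) := by rw [qms_act_mul']
      _ = dualAct γ ↑(s' * h) := by rw [show h * (h⁻¹ * s' * h) = s' * h by group]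
      _ = dualAct γ ↑h := h2

private lemma qms_stab_smul {c : ℝ} (hc : c ≠ 0) (γ : Fin k → ℝ) :
    {s : ↥H | dualAct (c • γ) ↑s = c • γ} = {s : ↥H | dualAct γ ↑s = γ} := by
  ext s
  simp only [mem_setOf_eq, qms_act_smul]
  exact smul_right_injective _ hc |>.eq_iff

/-- `Ω_rc` is invariant under the action of `H`. -/
private lemma qms_omega_act {γ : Fin k → ℝ} (hγ : γ ∈ OmegaRC H) (h : ↥H) :
    dualAct γ ↑h ∈ OmegaRC H := by
  obtain ⟨h1, h2⟩ := hγ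
  constructor
  · rw [qms_stab_act]
    have : Continuous fun s : ↥H => h⁻¹ * s * h :=
      ((continuous_mul_left h⁻¹).comp continuous_id).mul continuous_const
    exact h1.image this
  · rw [qms_orbit_act]
    exact h2

/-- `Ω_rc` is invariant under nonzero scalings. -/
private lemma qms_omega_smul {c : ℝ} (hc : c ≠ 0) {γ : Fin k → ℝ} (hγ : γ ∈ OmegaRC H) :
    c • γ ∈ OmegaRC H := by
  obtain ⟨h1, h2⟩ := hγ
  refine ⟨by rwa [qms_stab_smul hc], ?_⟩
  rw [qms_orbit_smul hc]
  obtain ⟨U, Z, hU, hZ, hOZ⟩ := h2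
  exact ⟨_, _, (qmsSmulHomeo hc).isOpenMap U hU,
    ((qmsSmulHomeo hc).isClosedEmbedding.isClosedMap) Z hZ, by
      rw [hOZ, image_inter (qmsSmulHomeo hc).injective]⟩


/-! #### The closed embedding of `H` into matrices -/

private lemma qms_closedEmbedding (hH : IsClosed (H : Set (Matrix.GeneralLinearGroup (Fin k) ℝ))) :
    Topology.IsClosedEmbedding (fun h : ↥H =>
      ((((h : Matrix.GeneralLinearGroup (Fin k) ℝ) : Matrix (Fin k) (Fin k) ℝ)),
        ((((h⁻¹ : ↥H) : Matrix.GeneralLinearGroup (Fin k) ℝ) : Matrix (Fin k) (Fin k) ℝ)))) := by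
  have e1 : Topology.IsClosedEmbedding (Subtype.val : ↥H → Matrix.GeneralLinearGroup (Fin k) ℝ) :=
    hH.isClosedEmbedding_subtypeVal
  have e2 : Topology.IsClosedEmbedding
      (Units.embedProduct (Matrix (Fin k) (Fin k) ℝ) :
        Matrix.GeneralLinearGroup (Fin k) ℝ →
          Matrix (Fin k) (Fin k) ℝ × (Matrix (Fin k) (Fin k) ℝ)ᵐᵒᵖ) := by
    refine ⟨Units.isEmbedding_embedProduct, ?_⟩
    have : Set.range (Units.embedProduct (Matrix (Fin k) (Fin k) ℝ))
        = {p : Matrix (Fin k) (Fin k) ℝ × (Matrix (Fin k) (Fin k) ℝ)ᵐᵒᵖ |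
            p.1 * p.2.unop = 1 ∧ p.2.unop * p.1 = 1} := by
      ext p
      constructor
      · rintro ⟨u, rfl⟩
        exact ⟨u.val_inv, u.inv_val⟩
      · rintro ⟨h1, h2⟩
        exact ⟨⟨p.1, p.2.unop, h1, h2⟩, Prod.ext rfl (MulOpposite.op_unop p.2)⟩
    rw [this]
    apply IsClosed.inter
    · exact isClosed_eq (continuous_fst.matrix_mul
        (MulOpposite.continuous_unop.comp continuous_snd)) continuous_const
    · exact isClosed_eq ((MulOpposite.continuous_unop.comp continuous_snd).matrix_mul
        continuous_fst) continuous_const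
  have e3 : Topology.IsClosedEmbedding
      (fun p : Matrix (Fin k) (Fin k) ℝ × (Matrix (Fin k) (Fin k) ℝ)ᵐᵒᵖ => (p.1, p.2.unop)) :=
    ((Homeomorph.refl _).prodCongr MulOpposite.opHomeomorph.symm).isClosedEmbedding
  exact (e3.comp e2).comp e1

/-! #### Infinitely many disjoint translates force infinite measure -/

section DT

variable {G : Type*} [Group G] [TopologicalSpace G] [IsTopologicalGroup G] [T2Space G]
  [MeasurableSpace G] [BorelSpace G]

private def qmsK (N : Set G) (l : List G) : Set G := ⋃ s ∈ l, (fun x : G => s * x) '' N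

private lemma qmsK_compact {N : Set G} (hN : IsCompact N) (l : List G) :
    IsCompact (qmsK N l) :=
  l.finite_toSet.isCompact_biUnion fun s _ => hN.image (continuous_mul_left s)

variable {T N : Set G} (hN : IsCompact N) (hT : ∀ C : Set G, IsCompact C → ∃ t ∈ T, t ∉ C)

private noncomputable def qmsList : ℕ → List G
  | 0 => []
  | (n + 1) =>
      (hT (qmsK N (qmsList n)) (qmsK_compact hN _)).choose :: qmsList n

private noncomputable def qmsSeq (n : ℕ) : G :=
  (hT (qmsK N (qmsList hN hT n)) (qmsK_compact hN _)).choose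

private lemma qmsList_succ (n : ℕ) :
    qmsList hN hT (n + 1) = qmsSeq hN hT n :: qmsList hN hT n := rfl

private lemma qmsSeq_mem (n : ℕ) : qmsSeq hN hT n ∈ T :=
  (hT (qmsK N (qmsList hN hT n)) (qmsK_compact hN _)).choose_spec.1

private lemma qmsSeq_not_mem (n : ℕ) : qmsSeq hN hT n ∉ qmsK N (qmsList hN hT n) :=
  (hT (qmsK N (qmsList hN hT n)) (qmsK_compact hN _)).choose_spec.2

private lemma qmsSeq_mem_list {m n : ℕ} (h : m < n) : qmsSeq hN hT m ∈ qmsList hN hT n := by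
  induction n with
  | zero => omega
  | succ n ih =>
    rw [qmsList_succ]
    rcases Nat.lt_succ_iff_lt_or_eq.mp h with h' | h'
    · exact List.mem_cons_of_mem _ (ih h')
    · subst h'; exact List.mem_cons_self

include hN hT in
private lemma qms_measure_top (μ : Measure G) [μ.IsMulLeftInvariant]
    {W : Set G} (hNmeas : MeasurableSet N) (hNpos : 0 < μ N)
    (hTW : ∀ t ∈ T, (fun x : G => t * x) '' N ⊆ W) : μ W = ∞ := by
  classical
  -- we run the escape construction with the compact set `N * N⁻¹`
  have hNN : IsCompact ((N : Set G) * N⁻¹) := hN.mul hN.inv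
  set t : ℕ → G := qmsSeq hNN hT with ht
  -- disjointness
  have hdisj : Pairwise (Function.onFun Disjoint fun n => (fun x : G => t n * x) '' N) := by
    have key : ∀ m n : ℕ, m < n → Disjoint ((fun x : G => t n * x) '' N)
        ((fun x : G => t m * x) '' N) := by
      intro m n hmn
      rw [Set.disjoint_left]
      rintro x ⟨u, hu, hux⟩ ⟨v, hv, hvx⟩
      apply qmsSeq_not_mem hNN hT n
      have : t n = t m * (v * u⁻¹) := by
        have h1 : t m * v = t n * u := by
          rw [show t m * v = x from hvx, show t n * u = x from hux]
        rw [← mul_assoc, h1, mul_assoc, mul_inv_cancel, mul_one]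
      refine mem_biUnion (qmsSeq_mem_list hNN hT hmn) ?_
      exact ⟨v * u⁻¹, Set.mul_mem_mul hv (Set.inv_mem_inv.mpr hu), this.symm⟩
    intro m n hmn
    rcases lt_or_gt_of_ne hmn with h | h
    · exact (key m n h).symm
    · exact key n m h
  have hmeas : ∀ n : ℕ, MeasurableSet ((fun x : G => t n * x) '' N) := by
    intro n
    rw [Set.image_mul_left]
    exact hNmeas.preimage (measurable_const_mul _)
  have hsub : (⋃ n : ℕ, (fun x : G => t n * x) '' N) ⊆ W :=
    Set.iUnion_subset fun n => hTW _ (qmsSeq_mem hNN hT n)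
  have hcount : μ (⋃ n : ℕ, (fun x : G => t n * x) '' N) = ∞ := by
    rw [measure_iUnion hdisj hmeas]
    have : ∀ n : ℕ, μ ((fun x : G => t n * x) '' N) = μ N := by
      intro n
      rw [Set.image_mul_left, measure_preimage_mul]
    simp_rw [this]
    exact ENNReal.tsum_const_eq_top_of_ne_zero hNpos.ne'
  exact top_unique (hcount ▸ measure_mono hsub)

end DT

/-! #### Rational closed balls -/

private def qmsVB (k : ℕ) (c : Fin k → ℚ) (r : ℚ) : Set (Fin k → ℝ) :=
  Metric.closedBall (fun i => (c i : ℝ)) (r : ℝ)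

private lemma qms_exists_ball {x : Fin k → ℝ} {U : Set (Fin k → ℝ)} (hU : IsOpen U)
    (hx : x ∈ U) :
    ∃ (c : Fin k → ℚ) (r : ℚ), x ∈ interior (qmsVB k c r) ∧ qmsVB k c r ⊆ U := by
  obtain ⟨ε, hε, hball⟩ := Metric.isOpen_iff.mp hU x hx
  obtain ⟨r, hr0, hrε⟩ := exists_rat_btwn (show (0 : ℝ) < ε / 4 by linarith)
  choose c hc1 hc2 using fun i =>
    exists_rat_btwn (show x i - (r : ℝ) / 2 < x i + (r : ℝ) / 2 by linarith)
  have hr0' : (0 : ℝ) < r := hr0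
  have hdist : dist (fun i => (c i : ℝ)) x ≤ (r : ℝ) / 2 := by
    rw [dist_pi_le_iff (by linarith)]
    intro i
    rw [Real.dist_eq, abs_le]
    refine ⟨by linarith [hc1 i], by linarith [hc2 i]⟩
  refine ⟨c, r, ?_, ?_⟩
  · apply Metric.ball_subset_interior_closedBall
    rw [Metric.mem_ball, dist_comm]
    linarith
  · intro y hy
    apply hball
    rw [Metric.mem_ball]
    calc dist y x ≤ dist y (fun i => (c i : ℝ)) + dist (fun i => (c i : ℝ)) x :=
          dist_triangle _ _ _
      _ ≤ (r : ℝ) + (r : ℝ) / 2 := add_le_add (Metric.mem_closedBall.mp hy) hdist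
      _ < ε := by linarith

/-! #### (Claim A) finite recurrence in a closed neighbourhood implies membership in `Ω_rc` -/

private lemma qms_mem_omega [MeasurableSpace ↥H] [BorelSpace ↥H] (μH : Measure ↥H) [μH.IsHaarMeasure]
    [LocallyCompactSpace ↥H]
    {γ : Fin k → ℝ} {V : Set (Fin k → ℝ)} (_hVcl : IsClosed V) (hγV : γ ∈ interior V)
    (hfin : μH {h : ↥H | dualAct γ ↑h ∈ V} ≠ ∞) : γ ∈ OmegaRC H := by
  have hstabclosed : IsClosed {h : ↥H | dualAct γ ↑h = γ} :=
    isClosed_eq (qms_cont_left γ) continuous_const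
  have hstab : IsCompact {h : ↥H | dualAct γ ↑h = γ} := by
    by_contra hnc
    have hT : ∀ C : Set ↥H, IsCompact C → ∃ t ∈ {h : ↥H | dualAct γ ↑h = γ}, t ∉ C := by
      intro C hC
      by_contra hcon
      push_neg at hcon
      exact hnc (hC.of_isClosed_subset hstabclosed hcon)
    have hN₀ : {h : ↥H | dualAct γ ↑h ∈ interior V} ∈ 𝓝 (1 : ↥H) := by
      apply (isOpen_interior.preimage (qms_cont_left γ)).mem_nhds
      show dualAct γ ↑(1 : ↥H) ∈ interior V
      rw [OneMemClass.coe_one, dualAct_one]; exact hγV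
    obtain ⟨N, hN𝓝, hNsub, hNcomp⟩ := local_compact_nhds hN₀
    have hNpos : 0 < μH N := MeasureTheory.Measure.measure_pos_of_mem_nhds μH hN𝓝
    apply hfin
    apply qms_measure_top hNcomp hT μH hNcomp.isClosed.measurableSet hNpos
    rintro s hs x ⟨n, hn, rfl⟩
    show dualAct γ ↑(s * n) ∈ V
    rw [← qms_act_mul', show dualAct γ ↑s = γ from hs]
    exact interior_subset (hNsub hn)
  refine ⟨hstab, ?_⟩
  have hcore : ∀ x, x ∈ closure (dualOrbit H γ) → x ∈ interior V → x ∈ dualOrbit H γ := by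
    intro x hxcl hxV
    by_contra hxO
    have hc : (fun p : (Fin k → ℝ) × ↥H => dualAct p.1 ↑p.2) ⁻¹' interior V
        ∈ 𝓝 (x, (1 : ↥H)) := by
      apply qms_cont_pair.continuousAt.preimage_mem_nhds
      rw [show dualAct x ↑(1 : ↥H) = x by rw [OneMemClass.coe_one, dualAct_one]]
      exact isOpen_interior.mem_nhds hxV
    rw [mem_nhds_prod_iff] at hc
    obtain ⟨s, hs, N', hN', hsub⟩ := hc
    obtain ⟨δ, hδ, hballs⟩ := Metric.mem_nhds_iff.mp hs
    obtain ⟨N, hN𝓝, hNsub, hNcomp⟩ := local_compact_nhds hN'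
    have hNpos : 0 < μH N := MeasureTheory.Measure.measure_pos_of_mem_nhds μH hN𝓝
    have hT : ∀ C : Set ↥H, IsCompact C →
        ∃ t ∈ {h : ↥H | dualAct γ ↑h ∈ Metric.ball x δ}, t ∉ C := by
      intro C hC
      have himc : IsCompact ((fun h : ↥H => dualAct γ ↑h) '' C) := hC.image (qms_cont_left γ)
      have hxim : x ∉ (fun h : ↥H => dualAct γ ↑h) '' C := by
        rintro ⟨h₀, _, rfl⟩
        exact hxO ⟨h₀, rfl⟩
      have hopen : IsOpen (Metric.ball x δ ∩ ((fun h : ↥H => dualAct γ ↑h) '' C)ᶜ) :=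
        Metric.isOpen_ball.inter himc.isClosed.isOpen_compl
      obtain ⟨y, ⟨hy1, hy2⟩, hyO⟩ := mem_closure_iff.mp hxcl _ hopen
        ⟨Metric.mem_ball_self hδ, hxim⟩
      obtain ⟨h₀, rfl⟩ := hyO
      exact ⟨h₀, hy1, fun hc₀ => hy2 ⟨h₀, hc₀, rfl⟩⟩
    apply hxO
    exfalso
    apply hfin
    apply qms_measure_top hNcomp hT μH hNcomp.isClosed.measurableSet hNpos
    rintro t ht y ⟨n, hn, rfl⟩
    show dualAct γ ↑(t * n) ∈ V
    rw [← qms_act_mul']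
    exact interior_subset (hsub (Set.mk_mem_prod (hballs ht) (hNsub hn)))
  apply ((isLocallyClosed_tfae (dualOrbit H γ)).out 3 0).mp
  rintro y ⟨h, rfl⟩
  refine ⟨(qmsHomeo ((h : Matrix.GeneralLinearGroup (Fin k) ℝ))) '' interior V,
    ⟨γ, hγV, rfl⟩, (qmsHomeo _).isOpenMap _ isOpen_interior, ?_⟩
  rintro z ⟨⟨w, hw, rfl⟩, hzcl⟩
  set e := qmsHomeo ((h : Matrix.GeneralLinearGroup (Fin k) ℝ))
  have hcl : closure (dualOrbit H γ) = e '' closure (dualOrbit H γ) := by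
    rw [e.image_closure, qms_orbit_image_homeo]
  have hwcl : w ∈ closure (dualOrbit H γ) := by
    rw [hcl] at hzcl
    exact (e.injective.mem_set_image).mp hzcl
  have hwO : w ∈ dualOrbit H γ := hcore w hwcl hw
  rw [← qms_orbit_image_homeo γ h]
  exact ⟨w, hwO, rfl⟩

/-! #### (Claim B) membership in `Ω_rc` gives a rational ball with finite recurrence -/

private lemma qms_exists_VB [MeasurableSpace ↥H] [BorelSpace ↥H] (μH : Measure ↥H) [μH.IsHaarMeasure] [SigmaCompactSpace ↥H]
    {γ : Fin k → ℝ} (hγ : γ ∈ OmegaRC H) :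
    ∃ (c : Fin k → ℚ) (r : ℚ), γ ∈ interior (qmsVB k c r) ∧
      μH {h : ↥H | dualAct γ ↑h ∈ qmsVB k c r} ≠ ∞ := by
  obtain ⟨hstab, horb⟩ := hγ
  have hγO : γ ∈ dualOrbit H γ := qms_mem_orbit_self γ
  haveI : Nonempty ↥(closure (dualOrbit H γ)) := ⟨⟨γ, subset_closure hγO⟩⟩
  haveI : CompleteSpace ↥(closure (dualOrbit H γ)) := isClosed_closure.completeSpace_coe
  set F : ℕ → Set ↥(closure (dualOrbit H γ)) := fun n => Nat.casesOn n
      ((Subtype.val ⁻¹' dualOrbit H γ)ᶜ)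
      (fun i => Subtype.val ⁻¹' ((fun h : ↥H => dualAct γ ↑h) '' compactCovering ↥H i))
    with hF
  have hFclosed : ∀ n, IsClosed (F n) := by
    rintro (_ | i)
    · exact horb.isOpen_preimage_val_closure.isClosed_compl
    · exact (((isCompact_compactCovering ↥H i).image (qms_cont_left γ)).isClosed.preimage
        continuous_subtype_val)
  have hFcover : ⋃ n, F n = univ := by
    rw [eq_univ_iff_forall]
    intro z
    by_cases hz : (z : Fin k → ℝ) ∈ dualOrbit H γ
    · obtain ⟨h₀, hh₀⟩ := hz
      have : h₀ ∈ ⋃ i, compactCovering ↥H i := by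
        rw [iUnion_compactCovering]; trivial
      obtain ⟨i, hi⟩ := mem_iUnion.mp this
      refine mem_iUnion.mpr ⟨i + 1, ?_⟩
      show (z : Fin k → ℝ) ∈ (fun h : ↥H => dualAct γ ↑h) '' compactCovering ↥H i
      exact ⟨h₀, hi, hh₀.symm⟩
    · exact mem_iUnion.mpr ⟨0, hz⟩
  obtain ⟨n, x, hx⟩ := nonempty_interior_of_iUnion_of_closed hFclosed hFcover
  have hxnhds := mem_interior_iff_mem_nhds.mp hx
  rw [mem_nhds_subtype] at hxnhds
  obtain ⟨u, hu, hpre⟩ := hxnhds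
  match n with
  | 0 =>
    exfalso
    obtain ⟨y, hyu, hyO⟩ := mem_closure_iff_nhds.mp x.2 u hu
    exact hpre (show (⟨y, subset_closure hyO⟩ : ↥(closure (dualOrbit H γ))) ∈ _ from hyu) hyO
  | (i + 1) =>
    obtain ⟨U, hUu, hUopen, hxU⟩ := mem_nhds_iff.mp hu
    have hUZ : ∀ z, z ∈ U → z ∈ closure (dualOrbit H γ) →
        z ∈ (fun h : ↥H => dualAct γ ↑h) '' compactCovering ↥H i := by
      intro z hzU hzZ
      exact hpre (show (⟨z, hzZ⟩ : ↥(closure (dualOrbit H γ))) ∈ _ from hUu hzU)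
    have hxF : x ∈ F (i + 1) := interior_subset hx
    have hxim : (x : Fin k → ℝ) ∈ (fun h : ↥H => dualAct γ ↑h) '' compactCovering ↥H i := hxF
    obtain ⟨h₀, hh₀C, hh₀⟩ := hxim
    set e := qmsHomeo ((h₀ : Matrix.GeneralLinearGroup (Fin k) ℝ))
    have hγU'' : γ ∈ e ⁻¹' U := by
      show dualAct γ ↑h₀ ∈ U
      rw [show dualAct γ ↑h₀ = (x : Fin k → ℝ) from hh₀]; exact hxU
    obtain ⟨c, r, hcr1, hcr2⟩ := qms_exists_ball (hUopen.preimage e.continuous) hγU''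
    have hclaim : {h : ↥H | dualAct γ ↑h ∈ qmsVB k c r} ⊆
        (fun p : ↥H × ↥H => p.1 * (p.2 * h₀⁻¹)) ''
          ({h : ↥H | dualAct γ ↑h = γ} ×ˢ compactCovering ↥H i) := by
      intro h hh
      have h1 : dualAct γ ↑(h * h₀) ∈ U := by
        rw [← qms_act_mul']
        exact hcr2 hh
      have h2 : dualAct γ ↑(h * h₀) ∈ closure (dualOrbit H γ) := subset_closure ⟨h * h₀, rfl⟩
      obtain ⟨c₀, hc₀C, hc₀eq⟩ := hUZ _ h1 h2
      refine ⟨(h * h₀ * c₀⁻¹, c₀), ⟨?_, hc₀C⟩, by dsimp only; group⟩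
      show dualAct γ ↑(h * h₀ * c₀⁻¹) = γ
      rw [← qms_act_mul' γ (h * h₀) c₀⁻¹, ← hc₀eq, qms_act_mul', mul_inv_cancel,
        OneMemClass.coe_one, dualAct_one]
    have hK' : IsCompact ((fun p : ↥H × ↥H => p.1 * (p.2 * h₀⁻¹)) ''
        ({h : ↥H | dualAct γ ↑h = γ} ×ˢ compactCovering ↥H i)) :=
      (hstab.prod (isCompact_compactCovering ↥H i)).image
        (continuous_fst.mul (continuous_snd.mul continuous_const))
    exact ⟨c, r, hcr1, ((measure_mono hclaim).trans_lt hK'.measure_lt_top).ne⟩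

/-! #### Measurability of `Ω_rc` -/

private lemma qms_measurable_u [MeasurableSpace ↥H] [BorelSpace ↥H] (μH : Measure ↥H) [SFinite μH] [SecondCountableTopology ↥H]
    {D : Set (Fin k → ℝ)} (hD : MeasurableSet D) :
    Measurable fun γ : Fin k → ℝ => μH {h : ↥H | dualAct γ ↑h ∈ D} :=
  measurable_measure_prodMk_left (qms_cont_pair.measurable hD)

private lemma qms_omega_eq [MeasurableSpace ↥H] [BorelSpace ↥H] (μH : Measure ↥H) [μH.IsHaarMeasure] [LocallyCompactSpace ↥H]
    [SigmaCompactSpace ↥H] :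
    OmegaRC H = ⋃ (c : Fin k → ℚ) (r : ℚ),
      (interior (qmsVB k c r) ∩
        {γ | μH {h : ↥H | dualAct γ ↑h ∈ qmsVB k c r} ≠ ∞}) := by
  apply Set.Subset.antisymm
  · intro γ hγ
    obtain ⟨c, r, h1, h2⟩ := qms_exists_VB μH hγ
    exact mem_iUnion.mpr ⟨c, mem_iUnion.mpr ⟨r, h1, h2⟩⟩
  · intro γ hγ
    simp only [mem_iUnion, mem_inter_iff, mem_setOf_eq] at hγ
    obtain ⟨c, r, h1, h2⟩ := hγ
    exact qms_mem_omega μH Metric.isClosed_closedBall h1 h2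

private lemma qms_omega_measurable [MeasurableSpace ↥H] [BorelSpace ↥H] (μH : Measure ↥H) [μH.IsHaarMeasure]
    [LocallyCompactSpace ↥H] [SigmaCompactSpace ↥H] [SFinite μH]
    [SecondCountableTopology ↥H] :
    MeasurableSet (OmegaRC H) := by
  rw [qms_omega_eq μH]
  refine MeasurableSet.iUnion fun c => MeasurableSet.iUnion fun r => ?_
  refine isOpen_interior.measurableSet.inter ?_
  exact (qms_measurable_u μH Metric.isClosed_closedBall.measurableSet)
    ((measurableSet_singleton (∞ : ℝ≥0∞)).compl)

/-! #### Quotient space machinery -/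

private lemma qms_measurable_mk :
    Measurable (Quotient.mk (orbitSetoid H)) := fun _ h => h

private lemma qms_measurableSet_quot {S : Set (OrbSpace H)} :
    MeasurableSet S ↔ MeasurableSet (Quotient.mk (orbitSetoid H) ⁻¹' S) := Iff.rfl

private lemma qms_scaleOrb_mk (a : ℝ) (γ : Fin k → ℝ) :
    scaleOrb H a (Quotient.mk (orbitSetoid H) γ) = Quotient.mk (orbitSetoid H) (a • γ) := rfl

private lemma qms_measurable_scaleOrb (a : ℝ) : Measurable (scaleOrb H a) := by
  intro S hS
  rw [qms_measurableSet_quot] at hS ⊢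
  have heq : Quotient.mk (orbitSetoid H) ⁻¹' (scaleOrb H a ⁻¹' S)
      = (fun γ : Fin k → ℝ => a • γ) ⁻¹' (Quotient.mk (orbitSetoid H) ⁻¹' S) := rfl
  exact (congrArg MeasurableSet heq).mpr ((measurable_const_smul a) hS)

private lemma qms_scaleOrb_inv {a : ℝ} (ha : a ≠ 0) (q : OrbSpace H) :
    scaleOrb H a (scaleOrb H a⁻¹ q) = q := by
  induction q using Quotient.ind with
  | _ γ =>
    show Quotient.mk (orbitSetoid H) (a • a⁻¹ • γ) = Quotient.mk (orbitSetoid H) γ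
    rw [smul_inv_smul₀ ha]

end Aux

/-- The function `γH ↦ μH {h | γ·h ∈ D}` on the orbit space. -/
private def qmsM {k : ℕ} (H : Subgroup (Matrix.GeneralLinearGroup (Fin k) ℝ))
    [MeasurableSpace ↥H] (μH : Measure ↥H) (D : Set (Fin k → ℝ)) : OrbSpace H → ℝ≥0∞ :=
  fun q => μH {h : ↥H | dualAct (Quotient.out q) ↑h ∈ D}

section Aux2

variable {k : ℕ} {H : Subgroup (Matrix.GeneralLinearGroup (Fin k) ℝ)}

private lemma qms_u_act [MeasurableSpace ↥H] [BorelSpace ↥H] (μH : Measure ↥H) [μH.IsMulLeftInvariant]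
    (D : Set (Fin k → ℝ)) (γ : Fin k → ℝ) (h₀ : ↥H) :
    μH {h : ↥H | dualAct (dualAct γ ↑h₀) ↑h ∈ D} = μH {h : ↥H | dualAct γ ↑h ∈ D} := by
  have hset : {h : ↥H | dualAct (dualAct γ ↑h₀) ↑h ∈ D}
      = (fun h : ↥H => h₀ * h) ⁻¹' {h : ↥H | dualAct γ ↑h ∈ D} := by
    ext h
    simp only [Set.mem_setOf_eq, Set.mem_preimage, qms_act_mul']
  rw [hset, measure_preimage_mul]

private lemma qmsM_mk [MeasurableSpace ↥H] [BorelSpace ↥H] (μH : Measure ↥H) [μH.IsMulLeftInvariant]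
    (D : Set (Fin k → ℝ)) (γ : Fin k → ℝ) :
    qmsM H μH D (Quotient.mk (orbitSetoid H) γ) = μH {h : ↥H | dualAct γ ↑h ∈ D} := by
  obtain ⟨h₀, hh₀⟩ := Quotient.mk_out (s := orbitSetoid H) γ
  show μH {h : ↥H | dualAct (Quotient.out (Quotient.mk (orbitSetoid H) γ)) ↑h ∈ D} = _
  conv_rhs => rw [hh₀]
  rw [qms_u_act]

private lemma qms_measurable_M [MeasurableSpace ↥H] [BorelSpace ↥H] (μH : Measure ↥H)
    [μH.IsMulLeftInvariant] [SFinite μH] [SecondCountableTopology ↥H]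
    {D : Set (Fin k → ℝ)} (hD : MeasurableSet D) :
    Measurable (qmsM H μH D) := by
  intro S hS
  rw [qms_measurableSet_quot]
  have heq : Quotient.mk (orbitSetoid H) ⁻¹' (qmsM H μH D ⁻¹' S)
      = (fun γ : Fin k → ℝ => μH {h : ↥H | dualAct γ ↑h ∈ D}) ⁻¹' S := by
    ext γ
    exact Iff.of_eq (congrArg (· ∈ S) (qmsM_mk μH D γ))
  exact (congrArg MeasurableSet heq).mpr (qms_measurable_u μH hD hS)

private lemma qms_key [MeasurableSpace ↥H] [BorelSpace ↥H] (μH : Measure ↥H)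
    [μH.IsMulLeftInvariant]
    (m : OrbSpace H → Measure (Fin k → ℝ))
    (hm : ∀ γ ∈ OmegaRC H, m (Quotient.mk (orbitSetoid H) γ)
      = Measure.map (fun x : ↥H => dualAct γ (x : Matrix.GeneralLinearGroup (Fin k) ℝ)) μH)
    (lam : Measure (OrbSpace H))
    (hsupp : lam ((Quotient.mk (orbitSetoid H) '' OmegaRC H)ᶜ) = 0)
    (hdisint : ∀ A : Set (Fin k → ℝ), MeasurableSet A → A ⊆ OmegaRC H →
      volume A = ∫⁻ q, m q A ∂lam)
    {D : Set (Fin k → ℝ)} (hD : MeasurableSet D) (hDΩ : D ⊆ OmegaRC H)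
    {E : Set (OrbSpace H)} (hE : MeasurableSet E) :
    volume (D ∩ Quotient.mk (orbitSetoid H) ⁻¹' E)
      = ∫⁻ q, E.indicator (qmsM H μH D) q ∂lam := by
  have hmeas : MeasurableSet (D ∩ Quotient.mk (orbitSetoid H) ⁻¹' E) :=
    hD.inter (qms_measurable_mk hE)
  rw [hdisint _ hmeas (Set.inter_subset_left.trans hDΩ)]
  apply lintegral_congr_ae
  have hae : ∀ᵐ q ∂lam, q ∈ Quotient.mk (orbitSetoid H) '' OmegaRC H :=
    mem_ae_iff.mpr hsupp
  filter_upwards [hae] with q hq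
  obtain ⟨γ, hγΩ, rfl⟩ := hq
  rw [hm γ hγΩ, Measure.map_apply (qms_cont_left γ).measurable hmeas]
  have hpre : (fun x : ↥H => dualAct γ ↑x) ⁻¹' (D ∩ Quotient.mk (orbitSetoid H) ⁻¹' E)
      = {h : ↥H | dualAct γ ↑h ∈ D} ∩
        {h : ↥H | Quotient.mk (orbitSetoid H) γ ∈ E} := by
    ext h
    have hmk : Quotient.mk (orbitSetoid H) (dualAct γ ↑h) = Quotient.mk (orbitSetoid H) γ :=
      (Quotient.sound (⟨h, rfl⟩ : (orbitSetoid H) γ (dualAct γ ↑h))).symm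
    simp only [Set.mem_preimage, Set.mem_inter_iff, Set.mem_setOf_eq, hmk]
    exact and_congr_right fun _ => by
      show Quotient.mk (orbitSetoid H) (dualAct γ ↑h) ∈ E ↔ _
      rw [hmk]
  by_cases hqE : Quotient.mk (orbitSetoid H) γ ∈ E
  · refine (congrArg (fun s => μH s) (hpre.trans ?_)).trans
      ((qmsM_mk μH D γ).symm.trans (Set.indicator_of_mem hqE _).symm)
    ext h; exact ⟨fun hh => hh.1, fun hh => ⟨hh, hqE⟩⟩
  · refine (congrArg (fun s => μH s) (hpre.trans ?_)).trans
      (measure_empty.trans (Set.indicator_of_notMem hqE _).symm)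
    ext h; exact ⟨fun hh => hqE hh.2, fun hh => hh.elim⟩

end Aux2


/-- If `G = ℝ^k ⋊ H` is unimodular and `λ̄` is the measure on the orbit
space `Ω_rc/H` from the disintegration of Lebesgue measure with fiber measures `μ_{γH}`,
then for every `a ∈ ℝ⁺` the measure `λ̄_a : B ↦ λ̄(Ba)` equals `a^k · λ̄`. -/
theorem quotient_measure_scaling {k : ℕ}
    (H : Subgroup (Matrix.GeneralLinearGroup (Fin k) ℝ))
    (hH : IsClosed (H : Set (Matrix.GeneralLinearGroup (Fin k) ℝ)))
    [MeasurableSpace ↥H] [BorelSpace ↥H]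
    (μH : Measure ↥H) [μH.IsHaarMeasure]
    -- `G` is unimodular, i.e. `Δ_H(h) = |det h|`:
    (hunimod : ∀ h : ↥H, Measure.map (fun x : ↥H => x * h⁻¹) μH
      = ENNReal.ofReal
          |(((h : Matrix.GeneralLinearGroup (Fin k) ℝ) : Matrix (Fin k) (Fin k) ℝ)).det| • μH)
    -- the fiber measures: on orbits in `Ω_rc` they are the pushforwards of Haar measure:
    (m : OrbSpace H → Measure (Fin k → ℝ))
    (hm : ∀ γ ∈ OmegaRC H, m (Quotient.mk (orbitSetoid H) γ)
      = Measure.map (fun x : ↥H => dualAct γ (x : Matrix.GeneralLinearGroup (Fin k) ℝ)) μH)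
    -- the quotient measure `λ̄`, concentrated on `Ω_rc/H`, disintegrating Lebesgue measure:
    (lam : Measure (OrbSpace H))
    (hsupp : lam ((Quotient.mk (orbitSetoid H) '' OmegaRC H)ᶜ) = 0)
    (hdisint : ∀ A : Set (Fin k → ℝ), MeasurableSet A → A ⊆ OmegaRC H →
      volume A = ∫⁻ q, m q A ∂lam) :
    ∀ a : ℝ, 0 < a →
      Measure.map (scaleOrb H a⁻¹) lam = ENNReal.ofReal (a ^ k) • lam := by
  intro a ha
  have ha' : a ≠ 0 := ha.ne'
  have hemb := qms_closedEmbedding hH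
  haveI : LocallyCompactSpace (Matrix (Fin k) (Fin k) ℝ) :=
    inferInstanceAs (LocallyCompactSpace (Fin k → Fin k → ℝ))
  haveI : SecondCountableTopology (Matrix (Fin k) (Fin k) ℝ) :=
    inferInstanceAs (SecondCountableTopology (Fin k → Fin k → ℝ))
  haveI : TopologicalSpace.PseudoMetrizableSpace (Matrix (Fin k) (Fin k) ℝ) :=
    inferInstanceAs (TopologicalSpace.PseudoMetrizableSpace (Fin k → Fin k → ℝ))
  haveI : LocallyCompactSpace ↥H := hemb.locallyCompactSpace
  haveI : SecondCountableTopology ↥H := hemb.isEmbedding.isInducing.secondCountableTopology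
  haveI : TopologicalSpace.PseudoMetrizableSpace ↥H :=
    hemb.isEmbedding.isInducing.pseudoMetrizableSpace
  haveI : SigmaCompactSpace ↥H := inferInstance
  have hΩ : MeasurableSet (OmegaRC H) := qms_omega_measurable μH
  set ν := Measure.map (scaleOrb H a⁻¹) lam with hν
  set c : ℝ≥0∞ := ENNReal.ofReal (a ^ k) with hc
  set D : (Fin k → ℚ) × ℚ → Set (Fin k → ℝ) :=
    fun i => qmsVB k i.1 i.2 ∩ OmegaRC H with hD
  set Dt : (Fin k → ℚ) × ℚ → Set (Fin k → ℝ) :=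
    fun i => (fun ω : Fin k → ℝ => a • ω) ⁻¹' (D i) with hDt
  have hDmeas : ∀ i, MeasurableSet (D i) := fun i =>
    Metric.isClosed_closedBall.measurableSet.inter hΩ
  have hDΩ : ∀ i, D i ⊆ OmegaRC H := fun i => Set.inter_subset_right
  have hDtmeas : ∀ i, MeasurableSet (Dt i) := fun i => (measurable_const_smul a) (hDmeas i)
  have hDtΩ : ∀ i, Dt i ⊆ OmegaRC H := by
    intro i ω hω
    have h1 : a • ω ∈ OmegaRC H := hDΩ i hω
    have h2 := qms_omega_smul (inv_ne_zero ha') h1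
    rwa [inv_smul_smul₀ ha'] at h2
  set Θ : (Fin k → ℚ) × ℚ → OrbSpace H → ℝ≥0∞ := fun i => qmsM H μH (Dt i) with hΘ
  have hΘmeas : ∀ i, Measurable (Θ i) := fun i => qms_measurable_M μH (hDtmeas i)
  have hkey : ∀ (B : Set (Fin k → ℝ)), MeasurableSet B → B ⊆ OmegaRC H →
      ∀ (E : Set (OrbSpace H)), MeasurableSet E →
      volume (B ∩ Quotient.mk (orbitSetoid H) ⁻¹' E)
        = ∫⁻ q, E.indicator (qmsM H μH B) q ∂lam :=
    fun B hB hBΩ E hE => qms_key μH m hm lam hsupp hdisint hB hBΩ hE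
  have hcomp : ∀ i q, Θ i (scaleOrb H a⁻¹ q) = qmsM H μH (D i) q := by
    intro i q
    induction q using Quotient.ind with
    | _ γ =>
      rw [qms_scaleOrb_mk]
      show qmsM H μH (Dt i) (Quotient.mk (orbitSetoid H) (a⁻¹ • γ)) = _
      rw [qmsM_mk, qmsM_mk]
      congr 1
      ext h
      simp only [Set.mem_setOf_eq, hDt, Set.mem_preimage]
      rw [← qms_act_smul, smul_inv_smul₀ ha']
  have hchain : ∀ i, ∀ E : Set (OrbSpace H), MeasurableSet E →
      ∫⁻ q, E.indicator (Θ i) q ∂ν = c * ∫⁻ q, E.indicator (Θ i) q ∂lam := by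
    intro i E hE
    have hσmeas : Measurable (scaleOrb H a⁻¹ : OrbSpace H → OrbSpace H) :=
      qms_measurable_scaleOrb _
    rw [hν, lintegral_map ((hΘmeas i).indicator hE) hσmeas]
    have h1 : (fun q => E.indicator (Θ i) (scaleOrb H a⁻¹ q))
        = fun q => ((scaleOrb H a⁻¹) ⁻¹' E).indicator (qmsM H μH (D i)) q := by
      funext q
      by_cases hq : scaleOrb H a⁻¹ q ∈ E
      · rw [Set.indicator_of_mem hq,
          Set.indicator_of_mem (show q ∈ (scaleOrb H a⁻¹) ⁻¹' E from hq)]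
        exact hcomp i q
      · rw [Set.indicator_of_notMem hq,
          Set.indicator_of_notMem (show q ∉ (scaleOrb H a⁻¹) ⁻¹' E from hq)]
    rw [h1, ← hkey (D i) (hDmeas i) (hDΩ i) _ (hσmeas hE)]
    have hset1 : D i ∩ Quotient.mk (orbitSetoid H) ⁻¹' ((scaleOrb H a⁻¹) ⁻¹' E)
        = (fun ω : Fin k → ℝ => a⁻¹ • ω) ⁻¹'
            (Dt i ∩ Quotient.mk (orbitSetoid H) ⁻¹' E) := by
      rw [Set.preimage_inter]
      congr 1
      ext ω
      simp only [hDt, Set.mem_preimage, smul_inv_smul₀ ha']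
    refine (congrArg (fun s => volume s) hset1).trans ?_
    have hvol : volume ((fun ω : Fin k → ℝ => a⁻¹ • ω) ⁻¹'
          (Dt i ∩ Quotient.mk (orbitSetoid H) ⁻¹' E))
        = c * volume (Dt i ∩ Quotient.mk (orbitSetoid H) ⁻¹' E) := by
      rw [MeasureTheory.Measure.addHaar_preimage_smul volume (inv_ne_zero ha')]
      congr 2
      rw [Module.finrank_fin_fun ℝ, inv_pow, inv_inv, abs_of_pos (pow_pos ha k)]
    rw [hvol, hkey (Dt i) (hDtmeas i) (hDtΩ i) E hE]
  set F : (Fin k → ℚ) × ℚ → Set (OrbSpace H) :=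
    fun i => (Θ i) ⁻¹' (Set.Ioo 0 ∞) with hF
  have hFmeas : ∀ i, MeasurableSet (F i) := fun i => (hΘmeas i) measurableSet_Ioo
  have hwd : ∀ i, ν.withDensity (Θ i) = c • lam.withDensity (Θ i) := by
    intro i
    ext E hE
    rw [withDensity_apply _ hE, Measure.smul_apply, withDensity_apply _ hE, smul_eq_mul,
      ← lintegral_indicator hE, ← lintegral_indicator hE]
    exact hchain i E hE
  have hrestr : ∀ i, ∀ E : Set (OrbSpace H), MeasurableSet E →
      ν (E ∩ F i) = c * lam (E ∩ F i) := by
    intro i E hE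
    set ψ : OrbSpace H → ℝ≥0∞ := (E ∩ F i).indicator (fun q => (Θ i q)⁻¹) with hψ
    have hψm : Measurable ψ := ((hΘmeas i).inv).indicator (hE.inter (hFmeas i))
    have hpoint : ∀ q, (Θ i * ψ) q = (E ∩ F i).indicator (1 : OrbSpace H → ℝ≥0∞) q := by
      intro q
      show Θ i q * ψ q = _
      by_cases hq : q ∈ E ∩ F i
      · rw [hψ, Set.indicator_of_mem hq, Set.indicator_of_mem hq]
        exact ENNReal.mul_inv_cancel hq.2.1.ne' hq.2.2.ne
      · rw [hψ, Set.indicator_of_notMem hq, Set.indicator_of_notMem hq, mul_zero]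
    calc ν (E ∩ F i)
        = ∫⁻ q, (E ∩ F i).indicator (1 : OrbSpace H → ℝ≥0∞) q ∂ν :=
          (lintegral_indicator_one (hE.inter (hFmeas i))).symm
      _ = ∫⁻ q, (Θ i * ψ) q ∂ν := lintegral_congr fun q => (hpoint q).symm
      _ = ∫⁻ q, ψ q ∂(ν.withDensity (Θ i)) :=
          (lintegral_withDensity_eq_lintegral_mul ν (hΘmeas i) hψm).symm
      _ = ∫⁻ q, ψ q ∂(c • lam.withDensity (Θ i)) := by rw [hwd i]
      _ = c * ∫⁻ q, ψ q ∂(lam.withDensity (Θ i)) := lintegral_smul_measure c ψ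
      _ = c * ∫⁻ q, (Θ i * ψ) q ∂lam := by
          rw [lintegral_withDensity_eq_lintegral_mul lam (hΘmeas i) hψm]
      _ = c * ∫⁻ q, (E ∩ F i).indicator (1 : OrbSpace H → ℝ≥0∞) q ∂lam := by
          rw [lintegral_congr hpoint]
      _ = c * lam (E ∩ F i) := by rw [lintegral_indicator_one (hE.inter (hFmeas i))]
  have hcover : ∀ γ ∈ OmegaRC H, ∃ i, Quotient.mk (orbitSetoid H) γ ∈ F i := by
    intro γ hγ
    have haγ : a • γ ∈ OmegaRC H := qms_omega_smul ha' hγ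
    obtain ⟨cc, r, h1, h2⟩ := qms_exists_VB μH haγ
    refine ⟨(cc, r), ?_⟩
    have hval : Θ (cc, r) (Quotient.mk (orbitSetoid H) γ)
        = μH {h : ↥H | dualAct (a • γ) ↑h ∈ qmsVB k cc r} := by
      show qmsM H μH (Dt (cc, r)) (Quotient.mk (orbitSetoid H) γ) = _
      rw [qmsM_mk]
      congr 1
      ext h
      simp only [Set.mem_setOf_eq, hDt, hD, Set.mem_preimage, Set.mem_inter_iff]
      constructor
      · rintro ⟨hmem, _⟩
        rwa [← qms_act_smul] at hmem
      · intro hmem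
        rw [← qms_act_smul]
        exact ⟨hmem, qms_omega_act haγ h⟩
    show Θ (cc, r) (Quotient.mk (orbitSetoid H) γ) ∈ Set.Ioo 0 ∞
    rw [hval]
    constructor
    · have hopen : IsOpen {h : ↥H | dualAct (a • γ) ↑h ∈ interior (qmsVB k cc r)} :=
        isOpen_interior.preimage (qms_cont_left _)
      have hne : (1 : ↥H) ∈ {h : ↥H | dualAct (a • γ) ↑h ∈ interior (qmsVB k cc r)} := by
        show dualAct (a • γ) ↑(1 : ↥H) ∈ interior (qmsVB k cc r)
        rw [OneMemClass.coe_one, dualAct_one]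
        exact h1
      calc (0 : ℝ≥0∞) < μH {h : ↥H | dualAct (a • γ) ↑h ∈ interior (qmsVB k cc r)} :=
            hopen.measure_pos μH ⟨1, hne⟩
        _ ≤ _ := measure_mono (Set.setOf_subset_setOf.mpr fun h hh => interior_subset hh)
    · exact lt_top_iff_ne_top.mpr h2
  set Good := ⋃ i, F i with hGoodDef
  have hGoodmeas : MeasurableSet Good := MeasurableSet.iUnion hFmeas
  have himg : ∀ γ ∈ OmegaRC H, Quotient.mk (orbitSetoid H) γ ∈ Good := fun γ hγ =>
    Set.mem_iUnion.mpr (hcover γ hγ)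
  have hlamGoodc : lam Goodᶜ = 0 := by
    apply measure_mono_null _ hsupp
    intro q hq hcon
    obtain ⟨γ, hγ, rfl⟩ := hcon
    exact hq (himg γ hγ)
  have hνGoodc : ν Goodᶜ = 0 := by
    rw [hν, Measure.map_apply (qms_measurable_scaleOrb _) hGoodmeas.compl]
    apply measure_mono_null _ hsupp
    intro q hq hcon
    obtain ⟨γ, hγ, rfl⟩ := hcon
    apply hq
    show scaleOrb H a⁻¹ (Quotient.mk (orbitSetoid H) γ) ∈ Good
    rw [qms_scaleOrb_mk]
    exact himg _ (qms_omega_smul (inv_ne_zero ha') hγ)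
  have hmain : ∀ E : Set (OrbSpace H), MeasurableSet E → ν E = c * lam E := by
    intro E hE
    obtain ⟨f, hf⟩ := exists_surjective_nat ((Fin k → ℚ) × ℚ)
    set G : ℕ → Set (OrbSpace H) := disjointed (fun n => F (f n)) with hG
    have hGmeas : ∀ n, MeasurableSet (G n) :=
      MeasurableSet.disjointed fun n => hFmeas (f n)
    have hGdisj : Pairwise (Function.onFun Disjoint G) := disjoint_disjointed _
    have hGunion : (⋃ n, G n) = Good := by
      rw [hG, iUnion_disjointed, hGoodDef]
      exact hf.iUnion_comp fun i => F i
    have hsplitν : ν E = ν (E ∩ Good) := by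
      have h0 : ν (E \ Good) = 0 := measure_mono_null (fun q hq => hq.2) hνGoodc
      rw [← measure_inter_add_diff E hGoodmeas, h0, add_zero]
    have hsplitlam : lam E = lam (E ∩ Good) := by
      have h0 : lam (E \ Good) = 0 := measure_mono_null (fun q hq => hq.2) hlamGoodc
      rw [← measure_inter_add_diff E hGoodmeas, h0, add_zero]
    rw [hsplitν, hsplitlam]
    have hEG : E ∩ Good = ⋃ n, E ∩ G n := by rw [← hGunion, Set.inter_iUnion]
    have hdisj' : Pairwise (Function.onFun Disjoint fun n => E ∩ G n) := fun mm nn hmn =>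
      Disjoint.mono Set.inter_subset_right Set.inter_subset_right (hGdisj hmn)
    have hmeas' : ∀ n, MeasurableSet (E ∩ G n) := fun n => hE.inter (hGmeas n)
    rw [hEG, measure_iUnion hdisj' hmeas', measure_iUnion hdisj' hmeas',
      ← ENNReal.tsum_mul_left]
    congr 1
    funext n
    have hsub : E ∩ G n ⊆ F (f n) := Set.inter_subset_right.trans (disjointed_subset _ n)
    have hres := hrestr (f n) (E ∩ G n) (hmeas' n)
    rwa [Set.inter_eq_self_of_subset_left hsub] at hres
  apply MeasureTheory.Measure.ext
  intro E hE
  rw [Measure.smul_apply, smul_eq_mul]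
  exact hmain E hE
end
end

section
/- Let H ≤ GL(k,ℝ) be closed acting on the right on the dual of ℝ^k. For ω in the dual, define H_ω^ε = {h ∈ H : |ωh − ω| ≤ ε}. Then ω lies in Ω_rc (i.e. has compact stabilizer and locally closed orbit) if and only if there exists ε > 0 such that H_ω^ε is compact. -/
open MeasureTheory Matrix
noncomputable section

/-- The Euclidean norm on the dual of `ℝ^k`. -/
def eunorm {k : ℕ} (v : Fin k → ℝ) : ℝ := Real.sqrt (∑ i, (v i) ^ 2)

section AuxLemmas

variable {k : ℕ}

theorem continuous_eunorm : Continuous (eunorm (k := k)) :=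
  Real.continuous_sqrt.comp (continuous_finset_sum _ fun i _ => (continuous_apply i).pow 2)

theorem eunorm_nonneg (v : Fin k → ℝ) : 0 ≤ eunorm v := Real.sqrt_nonneg _

theorem eunorm_zero : eunorm (0 : Fin k → ℝ) = 0 := by simp [eunorm]

theorem abs_apply_le_eunorm (v : Fin k → ℝ) (i : Fin k) : |v i| ≤ eunorm v := by
  rw [← Real.sqrt_sq_eq_abs]
  exact Real.sqrt_le_sqrt (Finset.single_le_sum (fun j _ => sq_nonneg (v j))
    (Finset.mem_univ i))

theorem dist_le_of_eunorm {v w : Fin k → ℝ} {ε : ℝ} (h : eunorm (v - w) ≤ ε) :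
    dist v w ≤ ε := by
  have hε : 0 ≤ ε := le_trans (eunorm_nonneg _) h
  rw [dist_pi_le_iff hε]
  intro i
  calc dist (v i) (w i) = |(v - w) i| := by simp [Real.dist_eq]
    _ ≤ eunorm (v - w) := abs_apply_le_eunorm _ i
    _ ≤ ε := h

theorem continuous_vecMul_left (A : Matrix (Fin k) (Fin k) ℝ) :
    Continuous fun v : Fin k → ℝ => Matrix.vecMul v A := by
  refine continuous_pi fun j => ?_
  simp only [Matrix.vecMul, dotProduct]
  exact continuous_finset_sum _ fun i _ => (continuous_apply i).mul continuous_const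

theorem continuous_dualAct_right (ω : Fin k → ℝ) :
    Continuous fun g : Matrix.GeneralLinearGroup (Fin k) ℝ => dualAct ω g := by
  have h1 : Continuous fun A : Matrix (Fin k) (Fin k) ℝ => Matrix.vecMul ω A := by
    refine continuous_pi fun j => ?_
    simp only [Matrix.vecMul, dotProduct]
    exact continuous_finset_sum _ fun i _ =>
      continuous_const.mul ((continuous_apply j).comp (continuous_apply i))
  exact h1.comp Units.continuous_val

/-- Right translation by `g` as a homeomorphism of the dual. -/
def dualHomeo (g : Matrix.GeneralLinearGroup (Fin k) ℝ) : (Fin k → ℝ) ≃ₜ (Fin k → ℝ) where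
  toFun v := dualAct v g
  invFun v := dualAct v g⁻¹
  left_inv v := by show dualAct (dualAct v g) g⁻¹ = v; rw [dualAct_mul, mul_inv_cancel, dualAct_one]
  right_inv v := by show dualAct (dualAct v g⁻¹) g = v; rw [dualAct_mul, inv_mul_cancel, dualAct_one]
  continuous_toFun := continuous_vecMul_left _
  continuous_invFun := continuous_vecMul_left _

theorem dualHomeo_apply (g : Matrix.GeneralLinearGroup (Fin k) ℝ) (v : Fin k → ℝ) :
    dualHomeo g v = dualAct v g := rfl

theorem dualOrbit_act_mem {H : Subgroup (Matrix.GeneralLinearGroup (Fin k) ℝ)} {ω v : Fin k → ℝ}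
    (hv : v ∈ dualOrbit H ω) (g : ↥H) : dualAct v ↑g ∈ dualOrbit H ω := by
  obtain ⟨h, rfl⟩ := hv
  exact ⟨h * g, by rw [Subgroup.coe_mul, ← dualAct_mul]⟩

end AuxLemmas

section Backward

variable {k : ℕ}

theorem mem_OmegaRC_of_compact {H : Subgroup (Matrix.GeneralLinearGroup (Fin k) ℝ)}
    {ω : Fin k → ℝ} {ε : ℝ} (hε : 0 < ε)
    (hC : IsCompact {h : ↥H |
      eunorm (dualAct ω (h : Matrix.GeneralLinearGroup (Fin k) ℝ) - ω) ≤ ε}) :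
    ω ∈ OmegaRC H := by
  set C := {h : ↥H | eunorm (dualAct ω (h : Matrix.GeneralLinearGroup (Fin k) ℝ) - ω) ≤ ε}
    with hCdef
  have q_cont : Continuous fun h : ↥H => dualAct ω (h : Matrix.GeneralLinearGroup (Fin k) ℝ) :=
    (continuous_dualAct_right ω).comp continuous_subtype_val
  constructor
  · -- compact stabilizer
    refine hC.of_isClosed_subset (isClosed_eq q_cont continuous_const) ?_
    intro h hh
    simp only [Set.mem_setOf_eq] at hh
    show eunorm (dualAct ω (h : Matrix.GeneralLinearGroup (Fin k) ℝ) - ω) ≤ ε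
    rw [hh, sub_self, eunorm_zero]
    exact hε.le
  · -- locally closed orbit
    set U : Set (Fin k → ℝ) := {v | eunorm (v - ω) < ε} with hUdef
    have hUopen : IsOpen U :=
      isOpen_lt (continuous_eunorm.comp (continuous_id.sub continuous_const)) continuous_const
    have hωU : ω ∈ U := by simp [hUdef, sub_self, eunorm_zero, hε]
    set W : Set (Fin k → ℝ) := ⋃ g : ↥H, dualHomeo (g : Matrix.GeneralLinearGroup (Fin k) ℝ) '' U
      with hWdef
    have hWopen : IsOpen W :=
      isOpen_iUnion fun g => (Homeomorph.isOpen_image _).mpr hUopen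
    have hKim : IsCompact ((fun h : ↥H =>
        dualAct ω (h : Matrix.GeneralLinearGroup (Fin k) ℝ)) '' C) := hC.image q_cont
    have hUorb : U ∩ dualOrbit H ω ⊆ (fun h : ↥H =>
        dualAct ω (h : Matrix.GeneralLinearGroup (Fin k) ℝ)) '' C := by
      rintro v ⟨hvU, h, rfl⟩
      refine ⟨h, ?_, rfl⟩
      have hlt : eunorm (dualAct ω (h : Matrix.GeneralLinearGroup (Fin k) ℝ) - ω) < ε := hvU
      exact hlt.le
    have hKorb : ((fun h : ↥H =>
        dualAct ω (h : Matrix.GeneralLinearGroup (Fin k) ℝ)) '' C) ⊆ dualOrbit H ω := by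
      rintro v ⟨h, _, rfl⟩; exact ⟨h, rfl⟩
    refine ⟨W, closure (dualOrbit H ω), hWopen, isClosed_closure, ?_⟩
    apply Set.Subset.antisymm
    · intro v hv
      obtain ⟨g, hg⟩ := hv
      refine ⟨Set.mem_iUnion.mpr ⟨g, ω, hωU, ?_⟩, subset_closure ⟨g, hg⟩⟩
      rw [dualHomeo_apply, ← hg]
    · rintro x ⟨hxW, hxcl⟩
      obtain ⟨g, y, hyU, hxy⟩ := Set.mem_iUnion.mp hxW
      rw [dualHomeo_apply] at hxy
      have hy : y = dualAct x ((g : Matrix.GeneralLinearGroup (Fin k) ℝ))⁻¹ := by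
        rw [← hxy, dualAct_mul, mul_inv_cancel, dualAct_one]
      have hycl : y ∈ closure (dualOrbit H ω) := by
        rw [hy]
        have hmaps : (fun v => dualAct v ((g : Matrix.GeneralLinearGroup (Fin k) ℝ))⁻¹) ''
            dualOrbit H ω ⊆ dualOrbit H ω := by
          rintro _ ⟨v, hv, rfl⟩
          have := dualOrbit_act_mem hv g⁻¹
          rwa [Subgroup.coe_inv] at this
        have h3 : dualAct x ((g : Matrix.GeneralLinearGroup (Fin k) ℝ))⁻¹ ∈
            (fun v => dualAct v ((g : Matrix.GeneralLinearGroup (Fin k) ℝ))⁻¹) ''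
              closure (dualOrbit H ω) := ⟨x, hxcl, rfl⟩
        have h4 : (fun v => dualAct v ((g : Matrix.GeneralLinearGroup (Fin k) ℝ))⁻¹) ''
            closure (dualOrbit H ω) ⊆ closure
              ((fun v => dualAct v ((g : Matrix.GeneralLinearGroup (Fin k) ℝ))⁻¹) ''
                dualOrbit H ω) :=
          image_closure_subset_closure_image (continuous_vecMul_left _)
        exact closure_mono hmaps (h4 h3)
      have hyK : y ∈ (fun h : ↥H =>
          dualAct ω (h : Matrix.GeneralLinearGroup (Fin k) ℝ)) '' C := by
        have h1 : y ∈ closure (U ∩ dualOrbit H ω) :=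
          hUopen.inter_closure ⟨hyU, hycl⟩
        have h2 := closure_mono hUorb h1
        rwa [hKim.isClosed.closure_eq] at h2
      have hyorb : y ∈ dualOrbit H ω := hKorb hyK
      rw [← hxy]
      exact dualOrbit_act_mem hyorb g

end Backward

section Forward

open MulOpposite Pointwise in
theorem compact_eps_of_mem_OmegaRC {k : ℕ}
    {H : Subgroup (Matrix.GeneralLinearGroup (Fin k) ℝ)}
    (hH : IsClosed (H : Set (Matrix.GeneralLinearGroup (Fin k) ℝ)))
    {ω : Fin k → ℝ} (hmem : ω ∈ OmegaRC H) :
    ∃ ε : ℝ, 0 < ε ∧ IsCompact {h : ↥H |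
      eunorm (dualAct ω (h : Matrix.GeneralLinearGroup (Fin k) ℝ) - ω) ≤ ε} := by
  classical
  obtain ⟨hS, hlc⟩ := hmem
  -- topological instances on `↥H`
  have hemb : Topology.IsClosedEmbedding (Units.embedProduct (Matrix (Fin k) (Fin k) ℝ)) := by
    refine ⟨Units.isEmbedding_embedProduct, ?_⟩
    have hr : Set.range (Units.embedProduct (Matrix (Fin k) (Fin k) ℝ)) =
        {p : Matrix (Fin k) (Fin k) ℝ × (Matrix (Fin k) (Fin k) ℝ)ᵐᵒᵖ |
          p.1 * p.2.unop = 1 ∧ p.2.unop * p.1 = 1} := by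
      ext p
      constructor
      · rintro ⟨u, rfl⟩
        exact ⟨u.mul_inv, u.inv_mul⟩
      · rintro ⟨h1, h2⟩
        refine ⟨⟨p.1, p.2.unop, h1, h2⟩, ?_⟩
        show (p.1, op p.2.unop) = p
        rw [op_unop]
    rw [hr]
    have c1 : Continuous fun p : Matrix (Fin k) (Fin k) ℝ × (Matrix (Fin k) (Fin k) ℝ)ᵐᵒᵖ =>
        p.1 * p.2.unop := continuous_fst.mul (continuous_unop.comp continuous_snd)
    have c2 : Continuous fun p : Matrix (Fin k) (Fin k) ℝ × (Matrix (Fin k) (Fin k) ℝ)ᵐᵒᵖ =>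
        p.2.unop * p.1 := (continuous_unop.comp continuous_snd).mul continuous_fst
    exact (isClosed_eq c1 continuous_const).inter (isClosed_eq c2 continuous_const)
  have hembH : Topology.IsClosedEmbedding (fun h : ↥H =>
      Units.embedProduct (Matrix (Fin k) (Fin k) ℝ)
        (h : Matrix.GeneralLinearGroup (Fin k) ℝ)) :=
    hemb.comp hH.isClosedEmbedding_subtypeVal
  haveI hM1 : LocallyCompactSpace (Matrix (Fin k) (Fin k) ℝ) :=
    inferInstanceAs (LocallyCompactSpace (Fin k → Fin k → ℝ))
  haveI hM2 : SecondCountableTopology (Matrix (Fin k) (Fin k) ℝ) :=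
    inferInstanceAs (SecondCountableTopology (Fin k → Fin k → ℝ))
  haveI : LocallyCompactSpace ((Matrix (Fin k) (Fin k) ℝ)ᵐᵒᵖ) :=
    opHomeomorph.symm.isClosedEmbedding.locallyCompactSpace
  haveI : SecondCountableTopology ((Matrix (Fin k) (Fin k) ℝ)ᵐᵒᵖ) :=
    opHomeomorph.symm.isEmbedding.secondCountableTopology
  haveI : LocallyCompactSpace ↥H := hembH.locallyCompactSpace
  haveI : SecondCountableTopology ↥H := hembH.isEmbedding.secondCountableTopology
  haveI : SigmaCompactSpace ↥H := inferInstance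
  have q_cont : Continuous fun h : ↥H => dualAct ω (h : Matrix.GeneralLinearGroup (Fin k) ℝ) :=
    (continuous_dualAct_right ω).comp continuous_subtype_val
  -- the orbit, and its description via the locally closed hypothesis
  set orb := dualOrbit H ω with horbdef
  have hωorb : ω ∈ orb := ⟨1, by rw [OneMemClass.coe_one, dualAct_one]⟩
  obtain ⟨U₀, Z, hU₀open, hZ, hEq⟩ := hlc
  have horbsubU₀ : orb ⊆ U₀ := by rw [hEq]; exact Set.inter_subset_left
  have horb_mem : ∀ v : Fin k → ℝ, v ∈ U₀ → v ∈ closure orb → v ∈ orb := by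
    intro v h1 h2
    have horb_eq' : orb = U₀ ∩ closure orb := by
      apply Set.Subset.antisymm
      · exact fun w hw => ⟨horbsubU₀ hw, subset_closure hw⟩
      · intro w hw
        have hZsub : closure orb ⊆ Z :=
          closure_minimal (by rw [hEq]; exact Set.inter_subset_right) hZ
        rw [hEq]; exact ⟨hw.1, hZsub hw.2⟩
    rw [horb_eq']
    exact ⟨h1, h2⟩
  have horb_eq : orb = U₀ ∩ closure orb := by
    apply Set.Subset.antisymm
    · exact fun v hv => ⟨horbsubU₀ hv, subset_closure hv⟩
    · intro v hv
      have hZsub : closure orb ⊆ Z :=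
        closure_minimal (by rw [hEq]; exact Set.inter_subset_right) hZ
      rw [hEq]; exact ⟨hv.1, hZsub hv.2⟩
  -- choice of ε
  have hωU₀ : ω ∈ U₀ := horbsubU₀ hωorb
  obtain ⟨δ, hδpos, hball⟩ := Metric.isOpen_iff.mp hU₀open ω hωU₀
  refine ⟨δ / 2, by positivity, ?_⟩
  set ε := δ / 2 with hεdef
  have hεpos : 0 < ε := by positivity
  have hεδ : ε < δ := by rw [hεdef]; linarith
  set A := {v : Fin k → ℝ | eunorm (v - ω) ≤ ε} with hAdef
  have hAsub : A ⊆ U₀ := by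
    intro v hv
    apply hball
    rw [Metric.mem_ball]
    exact lt_of_le_of_lt (dist_le_of_eunorm hv) hεδ
  have hAclosed : IsClosed A :=
    isClosed_le (continuous_eunorm.comp (continuous_id.sub continuous_const)) continuous_const
  set K := A ∩ closure orb with hKdef
  have hKclosed : IsClosed K := hAclosed.inter isClosed_closure
  have hK : IsCompact K := by
    refine (isCompact_closedBall ω ε).of_isClosed_subset hKclosed ?_
    intro v hv
    rw [Metric.mem_closedBall]
    exact dist_le_of_eunorm hv.1
  have hKorb : K ⊆ orb := by
    intro v hv
    rw [horb_eq]
    exact ⟨hAsub hv.1, hv.2⟩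
  -- Baire category on the closure of the orbit
  haveI : CompleteSpace ↥(closure orb) := isClosed_closure.completeSpace_coe
  have jmem : ∀ h : ↥H, dualAct ω (h : Matrix.GeneralLinearGroup (Fin k) ℝ) ∈ closure orb :=
    fun h => subset_closure ⟨h, rfl⟩
  set j : ↥H → ↥(closure orb) := fun h =>
    ⟨dualAct ω (h : Matrix.GeneralLinearGroup (Fin k) ℝ), jmem h⟩ with hjdef
  have j_cont : Continuous j := q_cont.subtype_mk _
  set f : Option ℕ → Set ↥(closure orb) := fun i => match i with
    | none => {x : ↥(closure orb) | (x : Fin k → ℝ) ∉ U₀}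
    | some n => j '' compactCovering ↥H n
    with hfdef
  have hfclosed : ∀ i, IsClosed (f i) := by
    rintro (_ | n)
    · exact hU₀open.isClosed_compl.preimage continuous_subtype_val
    · exact ((isCompact_compactCovering ↥H n).image j_cont).isClosed
  have hfcover : ⋃ i, f i = Set.univ := by
    ext x
    simp only [Set.mem_iUnion, Set.mem_univ, iff_true]
    by_cases hx : (x : Fin k → ℝ) ∈ U₀
    · have hxorb : (x : Fin k → ℝ) ∈ orb := horb_mem _ hx x.2
      obtain ⟨h, hh⟩ := hxorb
      have hhmem : h ∈ ⋃ n, compactCovering ↥H n := by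
        rw [iUnion_compactCovering]; trivial
      obtain ⟨n, hn⟩ := Set.mem_iUnion.mp hhmem
      exact ⟨some n, ⟨h, hn, Subtype.ext hh.symm⟩⟩
    · exact ⟨none, hx⟩
  have hdense := dense_iUnion_interior_of_closed hfclosed hfcover
  have hO'open : IsOpen {x : ↥(closure orb) | (x : Fin k → ℝ) ∈ U₀} :=
    hU₀open.preimage continuous_subtype_val
  have hO'ne : {x : ↥(closure orb) | (x : Fin k → ℝ) ∈ U₀}.Nonempty :=
    ⟨⟨ω, subset_closure hωorb⟩, hωU₀⟩
  obtain ⟨x, hxInt, hxU₀⟩ := hdense.exists_mem_open hO'open hO'ne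
  obtain ⟨i, hxi⟩ := Set.mem_iUnion.mp hxInt
  obtain (_ | n₀) := i
  · exact absurd hxU₀ (interior_subset hxi)
  -- the interior point
  obtain ⟨V', hV'open, hV'pre⟩ := isOpen_induced_iff.mp (isOpen_interior (s := f (some n₀)))
  have hxV' : (x : Fin k → ℝ) ∈ V' := by
    have : x ∈ Subtype.val ⁻¹' V' := by rw [hV'pre]; exact hxi
    exact this
  have hxorb : (x : Fin k → ℝ) ∈ orb := horb_mem _ hxU₀ x.2
  obtain ⟨h₀, hh₀⟩ := hxorb
  -- key claim: points of H mapping into V' lie in (stabilizer) * (compact)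
  have key : ∀ h : ↥H, dualAct ω (h : Matrix.GeneralLinearGroup (Fin k) ℝ) ∈ V' →
      h ∈ {h : ↥H | dualAct ω (h : Matrix.GeneralLinearGroup (Fin k) ℝ) = ω} *
        compactCovering ↥H n₀ := by
    intro h hhV'
    have hmem : j h ∈ interior (f (some n₀)) := by
      rw [← hV'pre]; exact hhV'
    obtain ⟨c, hcKc, hcj⟩ := interior_subset hmem
    have hceq : dualAct ω (c : Matrix.GeneralLinearGroup (Fin k) ℝ) =
        dualAct ω (h : Matrix.GeneralLinearGroup (Fin k) ℝ) := congrArg Subtype.val hcj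
    have hstab : h * c⁻¹ ∈ {h : ↥H | dualAct ω (h : Matrix.GeneralLinearGroup (Fin k) ℝ) = ω} := by
      show dualAct ω ((h * c⁻¹ : ↥H) : Matrix.GeneralLinearGroup (Fin k) ℝ) = ω
      rw [Subgroup.coe_mul, Subgroup.coe_inv, ← dualAct_mul, ← hceq, dualAct_mul,
        mul_inv_cancel, dualAct_one]
    have hdec : (h * c⁻¹) * c = h := inv_mul_cancel_right h c
    rw [← hdec]
    exact Set.mul_mem_mul hstab hcKc
  -- choice of a group element for each orbit point
  set gf : (Fin k → ℝ) → ↥H := fun v =>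
    if hv : v ∈ orb then
      (hv : ∃ g : ↥H, v = dualAct ω (g : Matrix.GeneralLinearGroup (Fin k) ℝ)).choose
    else 1 with hgfdef
  have hgf_spec : ∀ v ∈ orb, v = dualAct ω ((gf v : ↥H) : Matrix.GeneralLinearGroup (Fin k) ℝ) := by
    intro v hv
    have : gf v = (hv : ∃ g : ↥H,
        v = dualAct ω (g : Matrix.GeneralLinearGroup (Fin k) ℝ)).choose := by
      rw [hgfdef]; exact dif_pos hv
    rw [this]
    exact (hv : ∃ g : ↥H, v = dualAct ω (g : Matrix.GeneralLinearGroup (Fin k) ℝ)).choose_spec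
  have hxV'' : dualAct ω ((h₀ : ↥H) : Matrix.GeneralLinearGroup (Fin k) ℝ) ∈ V' := hh₀ ▸ hxV'
  -- cover the compact K by translated neighborhoods
  set Umap : (Fin k → ℝ) → Set (Fin k → ℝ) := fun v =>
    dualHomeo (((h₀ : Matrix.GeneralLinearGroup (Fin k) ℝ))⁻¹ *
      ((gf v : ↥H) : Matrix.GeneralLinearGroup (Fin k) ℝ)) '' V' with hUmapdef
  have hUnhds : ∀ v ∈ K, Umap v ∈ nhds v := by
    intro v hv
    have hvorb := hKorb hv
    refine ((Homeomorph.isOpen_image _).mpr hV'open).mem_nhds ?_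
    refine ⟨dualAct ω ((h₀ : ↥H) : Matrix.GeneralLinearGroup (Fin k) ℝ), hxV'', ?_⟩
    show dualAct (dualAct ω ((h₀ : ↥H) : Matrix.GeneralLinearGroup (Fin k) ℝ)) _ = v
    rw [dualAct_mul, mul_inv_cancel_left]
    exact (hgf_spec v hvorb).symm
  obtain ⟨t, htK, htcov⟩ := hK.elim_nhds_subcover Umap hUnhds
  -- the compact set containing the ε-almost-stabilizer
  set C1 : Set ↥H := ⋃ v ∈ t,
    {h : ↥H | dualAct ω (h : Matrix.GeneralLinearGroup (Fin k) ℝ) = ω} *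
      compactCovering ↥H n₀ * {(h₀⁻¹ * gf v : ↥H)} with hC1def
  have hC1comp : IsCompact C1 := by
    refine t.finite_toSet.isCompact_biUnion fun v _ => ?_
    exact (hS.mul (isCompact_compactCovering ↥H n₀)).mul isCompact_singleton
  have hTclosed : IsClosed {h : ↥H |
      eunorm (dualAct ω (h : Matrix.GeneralLinearGroup (Fin k) ℝ) - ω) ≤ ε} :=
    isClosed_le (continuous_eunorm.comp (q_cont.sub continuous_const)) continuous_const
  refine hC1comp.of_isClosed_subset hTclosed ?_
  intro h hh
  have hvK : dualAct ω (h : Matrix.GeneralLinearGroup (Fin k) ℝ) ∈ K := ⟨hh, jmem h⟩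
  obtain ⟨v, hvt, hvU⟩ := Set.mem_iUnion₂.mp (htcov hvK)
  obtain ⟨y, hyV', hy⟩ := hvU
  have hy' : dualAct y (((h₀ : ↥H) : Matrix.GeneralLinearGroup (Fin k) ℝ)⁻¹ *
      ((gf v : ↥H) : Matrix.GeneralLinearGroup (Fin k) ℝ)) =
      dualAct ω (h : Matrix.GeneralLinearGroup (Fin k) ℝ) := hy
  have hyeq : dualAct ω ((h : Matrix.GeneralLinearGroup (Fin k) ℝ) *
      (((gf v : ↥H) : Matrix.GeneralLinearGroup (Fin k) ℝ)⁻¹ *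
        ((h₀ : ↥H) : Matrix.GeneralLinearGroup (Fin k) ℝ))) = y := by
    rw [← dualAct_mul, ← hy', dualAct_mul]
    have hone : (((h₀ : ↥H) : Matrix.GeneralLinearGroup (Fin k) ℝ)⁻¹ *
        ((gf v : ↥H) : Matrix.GeneralLinearGroup (Fin k) ℝ)) *
        (((gf v : ↥H) : Matrix.GeneralLinearGroup (Fin k) ℝ)⁻¹ *
          ((h₀ : ↥H) : Matrix.GeneralLinearGroup (Fin k) ℝ)) = 1 := by group
    rw [hone, dualAct_one]
  have hyV'act : dualAct ω (((h * ((gf v)⁻¹ * h₀) : ↥H)) :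
      Matrix.GeneralLinearGroup (Fin k) ℝ) ∈ V' := by
    have hco : (((h * ((gf v)⁻¹ * h₀) : ↥H)) : Matrix.GeneralLinearGroup (Fin k) ℝ) =
        (h : Matrix.GeneralLinearGroup (Fin k) ℝ) *
          (((gf v : ↥H) : Matrix.GeneralLinearGroup (Fin k) ℝ)⁻¹ *
            ((h₀ : ↥H) : Matrix.GeneralLinearGroup (Fin k) ℝ)) := by
      push_cast
      rfl
    rw [hco, hyeq]
    exact hyV'
  have hkey := key _ hyV'act
  have hfin : (h * ((gf v)⁻¹ * h₀)) * (h₀⁻¹ * gf v) = h := by group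
  refine Set.mem_biUnion hvt ?_
  rw [← hfin]
  exact Set.mul_mem_mul hkey rfl

end Forward

/-- For `ω` in the dual of `ℝ^k` and
`H_ω^ε = {h ∈ H : |ωh − ω| ≤ ε}` (Euclidean norm), `ω` lies in `Ω_rc` (compact stabilizer
and locally closed orbit) if and only if `H_ω^ε` is compact for some `ε > 0`. -/
theorem mem_OmegaRC_iff_exists_compact_eps_stabilizer {k : ℕ}
    (H : Subgroup (Matrix.GeneralLinearGroup (Fin k) ℝ))
    (hH : IsClosed (H : Set (Matrix.GeneralLinearGroup (Fin k) ℝ)))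
    (ω : Fin k → ℝ) :
    ω ∈ OmegaRC H ↔ ∃ ε : ℝ, 0 < ε ∧
      IsCompact {h : ↥H |
        eunorm (dualAct ω (h : Matrix.GeneralLinearGroup (Fin k) ℝ) - ω) ≤ ε} := by
  constructor
  · exact fun hmem => compact_eps_of_mem_OmegaRC hH hmem
  · rintro ⟨ε, hε, hC⟩
    exact mem_OmegaRC_of_compact hε hC
end
end
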